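/- arXiv:2510.12321 — 5 statements merged into one kernel-verified Lean document; each statement's English description precedes it below -/
import Mathlib

section
/- If the propensity score is correctly specified, i.e., π(d(X),X) = P(A=d(X)|X) almost surely, then for any measurable outcome-model function Q(X,d(X)), the AIPW functional E[ Y·1{A=d(X)}/π(d(X),X) − (1{A=d(X)} − π(d(X),X))/π(d(X),X) · Q(X,d(X)) ] equals the value V(d) = E[Y(d)]. -/
/-!
Conditionally on `X`, the treatment `A` is independent of `W = (Y(1), Y(-1))`, so conditioning
additionally on `W` does not change the propensity:
`E[1{A = d(X)} | X, W] = E[1{A = d(X)} | X] = π(X)`.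
By consistency the AIPW integrand equals `(Y(d) - Q) / π · 1{A = d(X)} + Q`, and since
`(Y(d) - Q) / π` is `(X, W)`-measurable it can be pulled out of the conditional expectation,
which replaces the indicator by `π` and leaves `E[Y(d) - Q] + E[Q] = E[Y(d)]`.
-/

open MeasureTheory ProbabilityTheory MeasurableSpace Set

section

variable {Ω : Type*}

theorem isPiSystem_image2_inter (m₁ m₂ : MeasurableSpace Ω) :
    IsPiSystem (image2 (· ∩ ·) {s | MeasurableSet[m₁] s} {t | MeasurableSet[m₂] t}) := by
  rintro _ ⟨s₁, hs₁, t₁, ht₁, rfl⟩ _ ⟨s₂, hs₂, t₂, ht₂, rfl⟩ -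
  exact ⟨s₁ ∩ s₂, hs₁.inter hs₂, t₁ ∩ t₂, ht₁.inter ht₂, inter_inter_inter_comm _ _ _ _⟩

theorem generateFrom_image2_inter (m₁ m₂ : MeasurableSpace Ω) :
    generateFrom (image2 (· ∩ ·) {s | MeasurableSet[m₁] s} {t | MeasurableSet[m₂] t})
      = m₁ ⊔ m₂ := by
  refine le_antisymm (generateFrom_le ?_) (sup_le (fun s hs ↦ ?_) fun t ht ↦ ?_)
  · rintro _ ⟨s, hs, t, ht, rfl⟩
    exact (le_sup_left (b := m₂) _ hs).inter (le_sup_right (a := m₁) _ ht)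
  · exact measurableSet_generateFrom ⟨s, hs, univ, MeasurableSet.univ, inter_univ s⟩
  · exact measurableSet_generateFrom ⟨univ, MeasurableSet.univ, t, ht, univ_inter t⟩

theorem mul_div_sub_sub_div_mul_eq {y y' e p q : ℝ} (hp : p ≠ 0) (hy : y * e = y' * e) :
    y * e / p - (e - p) / p * q = (y' - q) / p * e + q := by
  rw [hy]
  field_simp
  ring

section CondExp

variable {m m₀ : MeasurableSpace Ω} {μ : Measure Ω}

theorem integral_mul_condExp (hm : m ≤ m₀) [SigmaFinite (μ.trim hm)] {f g : Ω → ℝ}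
    (hg : StronglyMeasurable[m] g) (hf : Integrable f μ) (hgf : Integrable (g * f) μ) :
    ∫ ω, g ω * (μ[f | m]) ω ∂μ = ∫ ω, g ω * f ω ∂μ := by
  calc ∫ ω, g ω * (μ[f | m]) ω ∂μ = ∫ ω, (μ[g * f | m]) ω ∂μ :=
        integral_congr_ae (condExp_mul_of_stronglyMeasurable_left hg hgf hf).symm
    _ = ∫ ω, g ω * f ω ∂μ := integral_condExp hm

theorem integral_sub_div_mul_add_eq (hm : m ≤ m₀) [SigmaFinite (μ.trim hm)]
    {f g p e : Ω → ℝ} (hf : StronglyMeasurable[m] f) (hg : StronglyMeasurable[m] g)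
    (hp : StronglyMeasurable[m] p) (hp₀ : ∀ᵐ ω ∂μ, p ω ≠ 0) (he : Integrable e μ)
    (he_cond : μ[e | m] =ᵐ[μ] p) (hf_int : Integrable f μ) (hg_int : Integrable g μ)
    (hint : Integrable (fun ω => (f ω - g ω) / p ω * e ω) μ) :
    ∫ ω, ((f ω - g ω) / p ω * e ω + g ω) ∂μ = ∫ ω, f ω ∂μ := by
  have hw : StronglyMeasurable[m] fun ω => (f ω - g ω) / p ω := (hf.sub hg).div hp
  calc ∫ ω, ((f ω - g ω) / p ω * e ω + g ω) ∂μ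
        = ∫ ω, (f ω - g ω) / p ω * (μ[e | m]) ω ∂μ + ∫ ω, g ω ∂μ := by
          rw [integral_add hint hg_int, integral_mul_condExp hm hw he hint]
    _ = ∫ ω, (f ω - g ω) ∂μ + ∫ ω, g ω ∂μ := by
          congr 1
          refine integral_congr_ae ?_
          filter_upwards [he_cond, hp₀] with ω hω hpω
          rw [hω, div_mul_cancel₀ _ hpω]
    _ = ∫ ω, f ω ∂μ := by rw [integral_sub hf_int hg_int, sub_add_cancel]

theorem condExp_indicator_inter [IsFiniteMeasure μ] {u t : Set Ω} (hu : MeasurableSet[m] u)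
    (ht : MeasurableSet t) : μ⟦u ∩ t | m⟧ =ᵐ[μ] u.indicator (μ⟦t | m⟧) := by
  rw [← indicator_indicator]
  exact condExp_indicator ((integrable_const 1).indicator ht) hu

end CondExp

namespace ProbabilityTheory.CondIndep

variable {m m₁ m₂ m₀ : MeasurableSpace Ω} [StandardBorelSpace Ω]
  {hm : m ≤ m₀} {μ : Measure Ω} [IsFiniteMeasure μ]

theorem sup_left (h : CondIndep m m₁ m₂ hm μ) (hm₁ : m₁ ≤ m₀) (hm₂ : m₂ ≤ m₀) :
    CondIndep m (m ⊔ m₁) m₂ hm μ := by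
  rw [← generateFrom_image2_inter, ← @generateFrom_measurableSet _ m₂]
  have hmeas : ∀ s ∈ image2 (· ∩ ·) {s | MeasurableSet[m] s} {t | MeasurableSet[m₁] t},
      MeasurableSet s := by
    rintro _ ⟨u, hu, t, ht, rfl⟩
    exact (hm _ hu).inter (hm₁ _ ht)
  refine CondIndepSets.condIndep' hmeas (fun t ht ↦ hm₂ _ ht) (isPiSystem_image2_inter m m₁)
    (@MeasurableSpace.isPiSystem_measurableSet _ m₂) ?_
  refine (condIndepSets_iff m hm _ {t | MeasurableSet[m₂] t} hmeas (fun t ht ↦ hm₂ _ ht) μ).mpr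
    ?_
  rintro _ t₂ ⟨u, hu, t₁, ht₁, rfl⟩ ht₂
  have hprod := (condIndep_iff _ _ _ _ hm₁ hm₂ μ).mp h t₁ t₂ ht₁ ht₂
  filter_upwards [condExp_indicator_inter hu ((hm₁ _ ht₁).inter (hm₂ _ ht₂)),
    condExp_indicator_inter (μ := μ) hu (hm₁ _ ht₁), hprod] with ω h₁ h₂ h₃
  rw [inter_assoc, h₁, Pi.mul_apply, h₂]
  by_cases hω : ω ∈ u <;> simp [hω, h₃]

theorem condExp_indicator_sup_eq (h : CondIndep m m₁ m₂ hm μ) (hm₁ : m₁ ≤ m₀) (hm₂ : m₂ ≤ m₀)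
    {t : Set Ω} (ht : MeasurableSet[m ⊔ m₁] t) : μ⟦t | m ⊔ m₂⟧ =ᵐ[μ] μ⟦t | m⟧ := by
  have hmm₁ : m ⊔ m₁ ≤ m₀ := sup_le hm hm₁
  have hmm₂ : m ⊔ m₂ ≤ m₀ := sup_le hm hm₂
  have hsup : CondIndep m (m ⊔ m₁) (m ⊔ m₂) hm μ :=
    ((h.sup_left hm₁ hm₂).symm.sup_left hm₂ hmm₁).symm
  have hmeas : StronglyMeasurable[m ⊔ m₂] (μ⟦t | m⟧) :=
    stronglyMeasurable_condExp.mono le_sup_left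
  refine (ae_eq_condExp_of_forall_setIntegral_eq hmm₂
    ((integrable_const 1).indicator (hmm₁ _ ht)) (fun s _ _ ↦ integrable_condExp.integrableOn)
    (fun s hs _ ↦ ?_) hmeas.aestronglyMeasurable).symm
  have hs₀ : MeasurableSet s := hmm₂ _ hs
  have hindicator : s.indicator (μ⟦t | m⟧) = μ⟦t | m⟧ * s.indicator 1 := by
    ext ω
    by_cases hω : ω ∈ s <;> simp [hω]
  calc ∫ ω in s, (μ⟦t | m⟧) ω ∂μ = ∫ ω, (μ⟦t | m⟧) ω * s.indicator 1 ω ∂μ := by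
        rw [← integral_indicator hs₀, hindicator]
        rfl
    _ = ∫ ω, (μ⟦t | m⟧) ω * (μ⟦s | m⟧) ω ∂μ :=
        (integral_mul_condExp hm stronglyMeasurable_condExp
          ((integrable_const 1).indicator hs₀) (hindicator ▸ integrable_condExp.indicator hs₀)).symm
    _ = ∫ ω, (μ⟦t ∩ s | m⟧) ω ∂μ :=
        integral_congr_ae ((condIndep_iff _ _ _ hm hmm₁ hmm₂ μ).mp hsup t s ht hs).symm
    _ = ∫ ω in s, t.indicator (fun _ ↦ 1) ω ∂μ := by
        rw [integral_condExp hm, inter_comm, ← indicator_indicator, integral_indicator hs₀]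

end ProbabilityTheory.CondIndep

end

theorem aipw_correct_ps_general
    {Ω 𝓧 : Type*} [MeasurableSpace Ω] [StandardBorelSpace Ω]
    [MeasurableSpace 𝓧]
    (μ : Measure Ω) [IsProbabilityMeasure μ]
    (X : Ω → 𝓧) (hX : Measurable X)
    (A : Ω → ℝ) (hA : Measurable A)
    (Y1 Ym1 Y : Ω → ℝ) (hY1 : Measurable Y1) (hYm1 : Measurable Ym1)
    -- consistency
    (hcons : ∀ ω, Y ω = (if A ω = 1 then Y1 ω else Ym1 ω))
    -- unconfoundedness
    (huncf : CondIndepFun (MeasurableSpace.comap X inferInstance) hX.comap_le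
      A (fun ω => (Y1 ω, Ym1 ω)) μ)
    -- treatment rule
    (d : 𝓧 → ℝ) (hd : Measurable d)
    -- working propensity score model evaluated at the rule: π(d(x),x)
    (π : 𝓧 → ℝ) (hπmeas : Measurable π)
    -- positivity of the working model: 0 < π(d(X),X) < 1 a.s.
    (hπpos : ∀ᵐ ω ∂μ, 0 < π (X ω) ∧ π (X ω) < 1)
    -- correct specification: π(d(X),X) = P(A = d(X) | X) a.s.
    (hcorrect : (fun ω => π (X ω)) =ᵐ[μ]
      μ[(fun ω => if A ω = d (X ω) then (1:ℝ) else 0) |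
        MeasurableSpace.comap X inferInstance])
    -- arbitrary (possibly misspecified) outcome model Q(X, d(X))
    (Q : 𝓧 → ℝ) (hQmeas : Measurable Q)
    (hQint : Integrable (fun ω => Q (X ω)) μ)
    -- integrability as needed
    (hint1 : Integrable (fun ω => if d (X ω) = 1 then Y1 ω else Ym1 ω) μ)
    (hint2 : Integrable (fun ω =>
      Y ω * (if A ω = d (X ω) then (1:ℝ) else 0) / π (X ω)
        - ((if A ω = d (X ω) then (1:ℝ) else 0) - π (X ω)) / π (X ω) * Q (X ω)) μ) :
    ∫ ω, (Y ω * (if A ω = d (X ω) then (1:ℝ) else 0) / π (X ω)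
        - ((if A ω = d (X ω) then (1:ℝ) else 0) - π (X ω)) / π (X ω) * Q (X ω)) ∂μ
      = ∫ ω, (if d (X ω) = 1 then Y1 ω else Ym1 ω) ∂μ := by
  set mX : MeasurableSpace Ω := MeasurableSpace.comap X inferInstance
  set W : Ω → ℝ × ℝ := fun ω => (Y1 ω, Ym1 ω)
  set mW : MeasurableSpace Ω := MeasurableSpace.comap W inferInstance
  set I : Ω → ℝ := fun ω => if A ω = d (X ω) then 1 else 0
  set Yd : Ω → ℝ := fun ω => if d (X ω) = 1 then Y1 ω else Ym1 ω
  have hXm : Measurable[mX ⊔ mW] X := (comap_measurable X).mono le_sup_left le_rfl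
  have hWm : Measurable[mX ⊔ mW] W := (comap_measurable W).mono le_sup_right le_rfl
  have hI : I = {ω | A ω = d (X ω)}.indicator (fun _ => 1) := by
    ext ω
    simp [I, indicator_apply]
  have hpropensity : μ[I | mX ⊔ mW] =ᵐ[μ] fun ω => π (X ω) := by
    have hset : MeasurableSet[mX ⊔ MeasurableSpace.comap A inferInstance] {ω | A ω = d (X ω)} :=
      measurableSet_eq_fun ((comap_measurable A).mono le_sup_right le_rfl)
        ((hd.comp (comap_measurable X)).mono le_sup_left le_rfl)
    rw [hI] at hcorrect ⊢
    exact (((condIndepFun_iff_condIndep _ _ _ _ μ).mp huncf).condExp_indicator_sup_eq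
      hA.comap_le (hY1.prodMk hYm1).comap_le hset).trans hcorrect.symm
  have hrepr : (fun ω => Y ω * I ω / π (X ω) - (I ω - π (X ω)) / π (X ω) * Q (X ω))
      =ᵐ[μ] fun ω => (Yd ω - Q (X ω)) / π (X ω) * I ω + Q (X ω) := by
    filter_upwards [hπpos] with ω hω
    refine mul_div_sub_sub_div_mul_eq hω.1.ne' ?_
    by_cases hAd : A ω = d (X ω) <;> simp [I, Yd, hAd, hcons]
  have hYd : StronglyMeasurable[mX ⊔ mW] Yd :=
    (Measurable.ite (hd.comp hXm (measurableSet_singleton 1)) (measurable_fst.comp hWm)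
      (measurable_snd.comp hWm)).stronglyMeasurable
  rw [integral_congr_ae hrepr]
  refine integral_sub_div_mul_add_eq (sup_le hX.comap_le (hY1.prodMk hYm1).comap_le) hYd
    (hQmeas.comp hXm).stronglyMeasurable (hπmeas.comp hXm).stronglyMeasurable
    (hπpos.mono fun ω hω => hω.1.ne')
    (hI ▸ (integrable_const 1).indicator (measurableSet_eq_fun hA (hd.comp hX)))
    hpropensity hint1 hQint ((hint2.sub hQint).congr ?_)
  filter_upwards [hrepr] with ω hω
  rw [Pi.sub_apply, hω, add_sub_cancel_right]

/-- If the propensity score model is correctly specified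
(`π(d(X),X) = P(A=d(X)|X)` a.s.), then for any integrable outcome-model function
`Q(X,d(X))` the AIPW functional equals the value `V(d) = E[Y(d)]`. -/
theorem aipw_correct_ps
    {Ω 𝓧 : Type*} [MeasurableSpace Ω] [StandardBorelSpace Ω] [Nonempty Ω]
    [MeasurableSpace 𝓧]
    (μ : Measure Ω) [IsProbabilityMeasure μ]
    (X : Ω → 𝓧) (hX : Measurable X)
    (A : Ω → ℝ) (hA : Measurable A) (hAval : ∀ ω, A ω = 1 ∨ A ω = -1)
    (Y1 Ym1 Y : Ω → ℝ) (hY1 : Measurable Y1) (hYm1 : Measurable Ym1)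
    -- consistency
    (hcons : ∀ ω, Y ω = (if A ω = 1 then Y1 ω else Ym1 ω))
    -- unconfoundedness
    (huncf : CondIndepFun (MeasurableSpace.comap X inferInstance) hX.comap_le
      A (fun ω => (Y1 ω, Ym1 ω)) μ)
    -- treatment rule
    (d : 𝓧 → ℝ) (hd : Measurable d) (hdval : ∀ x, d x = 1 ∨ d x = -1)
    -- working propensity score model evaluated at the rule: π(d(x),x)
    (π : 𝓧 → ℝ) (hπmeas : Measurable π)
    -- positivity of the working model: 0 < π(d(X),X) < 1 a.s.
    (hπpos : ∀ᵐ ω ∂μ, 0 < π (X ω) ∧ π (X ω) < 1)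
    -- correct specification: π(d(X),X) = P(A = d(X) | X) a.s.
    (hcorrect : (fun ω => π (X ω)) =ᵐ[μ]
      μ[(fun ω => if A ω = d (X ω) then (1:ℝ) else 0) |
        MeasurableSpace.comap X inferInstance])
    -- arbitrary (possibly misspecified) outcome model Q(X, d(X))
    (Q : 𝓧 → ℝ) (hQmeas : Measurable Q)
    (hQint : Integrable (fun ω => Q (X ω)) μ)
    -- integrability as needed
    (hint1 : Integrable (fun ω => if d (X ω) = 1 then Y1 ω else Ym1 ω) μ)
    (hint2 : Integrable (fun ω =>
      Y ω * (if A ω = d (X ω) then (1:ℝ) else 0) / π (X ω)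
        - ((if A ω = d (X ω) then (1:ℝ) else 0) - π (X ω)) / π (X ω) * Q (X ω)) μ) :
    ∫ ω, (Y ω * (if A ω = d (X ω) then (1:ℝ) else 0) / π (X ω)
        - ((if A ω = d (X ω) then (1:ℝ) else 0) - π (X ω)) / π (X ω) * Q (X ω)) ∂μ
      = ∫ ω, (if d (X ω) = 1 then Y1 ω else Ym1 ω) ∂μ :=
  aipw_correct_ps_general μ X hX A hA Y1 Ym1 Y hY1 hYm1 hcons huncf d hd π hπmeas hπpos hcorrect Q
    hQmeas hQint hint1 hint2
end

section
/- If the outcome model is correctly specified, i.e., Q(X,d(X)) = E[Y | X, A=d(X)] almost surely, then for any measurable function π(d(X),X) bounded away from 0 and 1, the AIPW functional E[ Y·1{A=d(X)}/π(d(X),X) − (1{A=d(X)} − π(d(X),X))/π(d(X),X) · Q(X,d(X)) ] equals the value V(d) = E[Y(d)]. Combined with the previous statement, the AIPW functional is doubly robust. -/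
/-!
Write `W = 1{A = d(X)}`, `Y(d)` for the outcome under the rule and `e = E[W | X]`.
Where `π(X) ≠ 0` the AIPW integrand equals `Q(X) + (Y - Q(X)) W / π(X)`. As `π(X)` and `Q(X)` are
`X`-measurable, the second term has mean `E[(E[Y W | X] - Q(X) e) / π(X)]`, which vanishes by the
correctness of the outcome model, whatever `π` is. It remains to see `E[Q(X)] = E[Y(d)]`.
By consistency `Y W = Y(d) W`, and unconfoundedness factors `E[Y(d) W | X] = E[Y(d) | X] e`, so
`Q(X) e = E[Y(d) | X] e` and positivity of `e` gives `Q(X) = E[Y(d) | X]`.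

The factorization is checked on each level set `{d(X) = a}`, where `Y(d) W` is the product of a
function of `A` and a function of `(Y(1), Y(-1))`. Conditional independence is read off the
regular conditional distribution given `X`, under which the `X`-measurable event `{d(X) = a}` is
almost surely sure or null; this also lets us work with `1{d(X) = a} Y(a)` in place of the possibly
non-integrable `Y(a)`.
-/

open MeasureTheory ProbabilityTheory

namespace ProbabilityTheory

variable {Ω : Type*} {m mΩ : MeasurableSpace Ω} [StandardBorelSpace Ω]
  {μ : Measure Ω} [IsFiniteMeasure μ]

lemma ae_ae_condExpKernel_mem_iff (hm : m ≤ mΩ) {s : Set Ω} (hs : MeasurableSet[m] s) :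
    ∀ᵐ ω ∂μ.trim hm, ∀ᵐ ω' ∂condExpKernel μ m ω, ω' ∈ s ↔ ω ∈ s := by
  have hind : μ⟦s | m⟧ = s.indicator 1 :=
    condExp_of_stronglyMeasurable hm (stronglyMeasurable_one.indicator hs)
      ((integrable_const 1).indicator (hm s hs))
  filter_upwards [condExpKernel_ae_eq_trim_condExp hm (hm s hs)] with ω hω
  rw [hind] at hω
  by_cases hωs : ω ∈ s
  · have : condExpKernel μ m ω sᶜ = 0 := by
      rw [prob_compl_eq_zero_iff (hm s hs), ← ENNReal.toReal_eq_one_iff, ← measureReal_def]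
      simpa [hωs] using hω
    filter_upwards [measure_eq_zero_iff_ae_notMem.1 this] with ω' hω'
    simpa [hωs] using hω'
  · have : condExpKernel μ m ω s = 0 := by
      rw [← measureReal_eq_zero_iff]
      simpa [hωs] using hω
    filter_upwards [measure_eq_zero_iff_ae_notMem.1 this] with ω' hω'
    simp [hωs, hω']

lemma CondIndepFun.indicator_right {β β' : Type*} [MeasurableSpace β] [MeasurableSpace β']
    [Zero β'] {hm : m ≤ mΩ} {f : Ω → β} {g : Ω → β'} (hfg : CondIndepFun m hm f g μ) {s : Set Ω}
    (hs : MeasurableSet[m] s) : CondIndepFun m hm f (s.indicator g) μ := by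
  rw [CondIndepFun, Kernel.indepFun_iff_measure_inter_preimage_eq_mul] at hfg ⊢
  intro t u ht hu
  filter_upwards [hfg t u ht hu, ae_ae_condExpKernel_mem_iff hm hs] with ω hω hconc
  by_cases hωs : ω ∈ s
  · have hg : s.indicator g ⁻¹' u =ᵐ[condExpKernel μ m ω] g ⁻¹' u := by
      refine Filter.EventuallyEq.preimage ?_ u
      filter_upwards [hconc] with ω' hω' using Set.indicator_of_mem (hω'.2 hωs) g
    rwa [measure_congr hg, measure_congr ((ae_eq_refl _).inter hg)]
  · have hg : s.indicator g ⁻¹' u =ᵐ[condExpKernel μ m ω] (fun _ ↦ (0 : β')) ⁻¹' u := by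
      refine Filter.EventuallyEq.preimage ?_ u
      filter_upwards [hconc] with ω' hω' using Set.indicator_of_notMem (mt hω'.1 hωs) g
    rw [measure_congr hg, measure_congr ((ae_eq_refl _).inter hg)]
    by_cases h0 : (0 : β') ∈ u <;> simp [h0]

lemma CondIndepFun.condExp_mul_ae_eq {hm : m ≤ mΩ} {U V : Ω → ℝ} (hUV : CondIndepFun m hm U V μ)
    (hU : Measurable U) (hV : Measurable V) (hUi : Integrable U μ) (hVi : Integrable V μ)
    (hUVi : Integrable (U * V) μ) :
    μ[U * V | m] =ᵐ[μ] μ[U | m] * μ[V | m] := by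
  have hker := (condIndepFun_iff_map_prod_eq_prod_map_map hU hV).1 hUV
  have hindep : ∀ᵐ ω ∂μ, U ⟂ᵢ[condExpKernel μ m ω] V := by
    filter_upwards [ae_of_ae_trim hm hker] with ω hω
    rw [indepFun_iff_map_prod_eq_prod_map_map hU.aemeasurable hV.aemeasurable]
    simpa [Kernel.map_apply _ (hU.prodMk hV), Kernel.prod_apply, Kernel.map_apply _ hU,
      Kernel.map_apply _ hV] using hω
  filter_upwards [condExp_ae_eq_integral_condExpKernel hm hUVi,
    condExp_ae_eq_integral_condExpKernel hm hUi, condExp_ae_eq_integral_condExpKernel hm hVi,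
    hindep] with ω hUVω hUω hVω hω
  rw [hUVω, Pi.mul_apply, hUω, hVω]
  exact hω.integral_mul_eq_mul_integral hU.aestronglyMeasurable hV.aestronglyMeasurable

end ProbabilityTheory

namespace MeasureTheory

variable {Ω : Type*} {m mΩ : MeasurableSpace Ω} {μ : Measure Ω} {s : Set Ω} {f g : Ω → ℝ}

lemma ae_condExp_eq_of_eqOn (hs : MeasurableSet[m] s) (hf : Integrable f μ)
    (hg : Integrable g μ) (hfg : Set.EqOn f g s) :
    ∀ᵐ ω ∂μ, ω ∈ s → μ[f | m] ω = μ[g | m] ω := by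
  filter_upwards [condExp_indicator hf hs, condExp_indicator hg hs] with ω hfω hgω hω
  rw [← Set.indicator_of_mem hω (μ[f | m]), ← Set.indicator_of_mem hω (μ[g | m]), ← hfω, ← hgω,
    Set.indicator_congr hfg]

lemma integral_mul_eq_zero_of_condExp_ae_eq_zero (hm : m ≤ mΩ) [SigmaFinite (μ.trim hm)]
    (hf : StronglyMeasurable[m] f) (hfg : Integrable (f * g) μ) (hg : Integrable g μ)
    (hg0 : μ[g | m] =ᵐ[μ] 0) :
    ∫ ω, f ω * g ω ∂μ = 0 := by
  calc ∫ ω, f ω * g ω ∂μ = ∫ ω, μ[f * g | m] ω ∂μ := (integral_condExp hm).symm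
    _ = ∫ ω, (f * μ[g | m]) ω ∂μ :=
      integral_congr_ae (condExp_mul_of_stronglyMeasurable_left hf hfg hg)
    _ = 0 := by
      rw [integral_congr_ae (show f * μ[g | m] =ᵐ[μ] 0 by filter_upwards [hg0] with ω h; simp [h])]
      simp

end MeasureTheory

section CausalInference

variable {Ω : Type*} {m mΩ : MeasurableSpace Ω} {μ : Measure Ω}

/-- The outcome `Y(D)` under treatment `D`; every value of `D` other than `1` counts as `-1`. -/
noncomputable def potentialOutcome (Y1 Ym1 D : Ω → ℝ) : Ω → ℝ :=
  fun ω => if D ω = 1 then Y1 ω else Ym1 ω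

noncomputable def agreement (A D : Ω → ℝ) : Ω → ℝ := fun ω => if A ω = D ω then 1 else 0

variable {A D Y1 Ym1 : Ω → ℝ}

lemma measurable_potentialOutcome (hY1 : Measurable Y1) (hYm1 : Measurable Ym1)
    (hD : Measurable D) : Measurable (potentialOutcome Y1 Ym1 D) :=
  Measurable.ite (measurableSet_eq_fun hD measurable_const) hY1 hYm1

lemma measurable_agreement (hA : Measurable A) (hD : Measurable D) :
    Measurable (agreement A D) :=
  Measurable.ite (measurableSet_eq_fun hA hD) measurable_const measurable_const

lemma norm_agreement_le (ω : Ω) : ‖agreement A D ω‖ ≤ 1 := by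
  unfold agreement; split_ifs <;> simp

lemma integrable_agreement [IsFiniteMeasure μ] (hA : Measurable A) (hD : Measurable D) :
    Integrable (agreement A D) μ :=
  .of_bound (measurable_agreement hA hD).aestronglyMeasurable 1 (ae_of_all _ norm_agreement_le)

lemma potentialOutcome_mul_agreement :
    potentialOutcome Y1 Ym1 A * agreement A D = potentialOutcome Y1 Ym1 D * agreement A D := by
  ext ω
  by_cases h : A ω = D ω <;> simp [potentialOutcome, agreement, h]

lemma integral_aipw_eq_integral_outcomeModel [IsFiniteMeasure μ] (hm : m ≤ mΩ)
    {Y W P Q : Ω → ℝ} (hP : Measurable[m] P) {ε : ℝ} (hε : 0 < ε) (hPε : ∀ᵐ ω ∂μ, ε < P ω)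
    (hQ : Measurable[m] Q) (hQi : Integrable Q μ) (hW : AEStronglyMeasurable W μ)
    (hWbdd : ∀ ω, ‖W ω‖ ≤ 1) (hYW : Integrable (fun ω => Y ω * W ω) μ)
    (hcorrect : μ[fun ω => Y ω * W ω | m] =ᵐ[μ] fun ω => Q ω * μ[W | m] ω) :
    ∫ ω, (Y ω * W ω / P ω - (W ω - P ω) / P ω * Q ω) ∂μ = ∫ ω, Q ω ∂μ := by
  have hQW : Integrable (fun ω => Q ω * W ω) μ := hQi.mul_bdd hW (ae_of_all _ hWbdd)
  have hWi : Integrable W μ := .of_bound hW 1 (ae_of_all _ hWbdd)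
  set R : Ω → ℝ := fun ω => Y ω * W ω - Q ω * W ω
  have hR : Integrable R μ := hYW.sub hQW
  have hQpull : μ[fun ω => Q ω * W ω | m] =ᵐ[μ] fun ω => Q ω * μ[W | m] ω :=
    condExp_mul_of_stronglyMeasurable_left hQ.stronglyMeasurable hQW hWi
  have hR0 : μ[R | m] =ᵐ[μ] 0 := by
    filter_upwards [condExp_sub hYW hQW m, hcorrect, hQpull] with ω hsub hY hQ
    change μ[(fun ω => Y ω * W ω) - fun ω => Q ω * W ω | m] ω = 0
    rw [hsub, Pi.sub_apply, hY, hQ, sub_self]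
  have hPR : Integrable (fun ω => (P ω)⁻¹ * R ω) μ := by
    refine hR.bdd_mul (c := ε⁻¹) (hP.mono hm le_rfl).inv.aestronglyMeasurable ?_
    filter_upwards [hPε] with ω hω
    rw [norm_inv, Real.norm_of_nonneg (hε.trans hω).le]
    exact inv_anti₀ hε hω.le
  calc ∫ ω, (Y ω * W ω / P ω - (W ω - P ω) / P ω * Q ω) ∂μ
      = ∫ ω, ((P ω)⁻¹ * R ω + Q ω) ∂μ := by
        refine integral_congr_ae ?_
        filter_upwards [hPε] with ω hω
        field_simp [(hε.trans hω).ne']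
        ring
    _ = ∫ ω, Q ω ∂μ := by
        rw [integral_add hPR hQi, integral_mul_eq_zero_of_condExp_ae_eq_zero
          (f := fun ω => (P ω)⁻¹) hm hP.inv.stronglyMeasurable hPR hR hR0, zero_add]

variable [StandardBorelSpace Ω] [IsFiniteMeasure μ] {hm : m ≤ mΩ}

lemma ae_condExp_potentialOutcome_mul_agreement_of_eq
    (huncf : CondIndepFun m hm A (fun ω => (Y1 ω, Ym1 ω)) μ) (hA : Measurable A)
    (hY1 : Measurable Y1) (hYm1 : Measurable Ym1) (hD : Measurable[m] D)
    (hint : Integrable (potentialOutcome Y1 Ym1 D) μ) (a : ℝ) :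
    ∀ᵐ ω ∂μ, D ω = a →
      μ[potentialOutcome Y1 Ym1 D * agreement A D | m] ω
        = μ[potentialOutcome Y1 Ym1 D | m] ω * μ[agreement A D | m] ω := by
  -- On `{D = a}` the rule is frozen at `a`: there `agreement A D` is the function `1{A = a}` of
  -- `A`, and `potentialOutcome Y1 Ym1 D` is the function `Y(a)` of `(Y1, Ym1)`.
  set s := {ω | D ω = a}
  have hs : MeasurableSet[m] s := hD (measurableSet_singleton a)
  set U := agreement A fun _ => a
  set V := s.indicator (potentialOutcome Y1 Ym1 fun _ => a)
  have hUV : CondIndepFun m hm U V μ :=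
    CondIndepFun.indicator_right (hs := hs) <| huncf.comp
      (measurable_agreement measurable_id measurable_const)
      (measurable_potentialOutcome measurable_fst measurable_snd measurable_const)
  have hDΩ : Measurable D := hD.mono hm le_rfl
  have hW := integrable_agreement (μ := μ) hA hDΩ
  have hYW : Integrable (potentialOutcome Y1 Ym1 D * agreement A D) μ :=
    hint.mul_bdd (measurable_agreement hA hDΩ).aestronglyMeasurable
      (ae_of_all _ norm_agreement_le)
  have hU : Measurable U := measurable_agreement hA measurable_const
  have hUi : Integrable U μ := integrable_agreement hA measurable_const
  have hV : Measurable V :=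
    (measurable_potentialOutcome hY1 hYm1 measurable_const).indicator (hm s hs)
  have hVi : Integrable V μ := by
    rw [show V = s.indicator (potentialOutcome Y1 Ym1 D) from
      Set.indicator_congr fun ω (hω : D ω = a) => by simp [potentialOutcome, hω]]
    exact hint.indicator (hm s hs)
  have hUVi : Integrable (U * V) μ :=
    hVi.bdd_mul hU.aestronglyMeasurable (ae_of_all _ norm_agreement_le)
  filter_upwards [hUV.condExp_mul_ae_eq hU hV hUi hVi hUVi,
    ae_condExp_eq_of_eqOn hs hYW hUVi fun ω (hω : D ω = a) => by
      simp only [Pi.mul_apply, U, V, Set.indicator_of_mem (show ω ∈ s from hω)]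
      simp only [potentialOutcome, agreement, hω]
      ring,
    ae_condExp_eq_of_eqOn hs hint hVi fun ω (hω : D ω = a) => by
      simp [potentialOutcome, V, s, hω],
    ae_condExp_eq_of_eqOn hs hW hUi fun ω (hω : D ω = a) => by
      simp [agreement, U, hω]] with ω hprod hYWω hYω hWω hω
  rw [hYWω hω, hprod, Pi.mul_apply, hYω hω, hWω hω, mul_comm]

lemma condExp_potentialOutcome_mul_agreement
    (huncf : CondIndepFun m hm A (fun ω => (Y1 ω, Ym1 ω)) μ) (hA : Measurable A)
    (hY1 : Measurable Y1) (hYm1 : Measurable Ym1) (hD : Measurable[m] D)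
    (hDval : ∀ ω, D ω = 1 ∨ D ω = -1) (hint : Integrable (potentialOutcome Y1 Ym1 D) μ) :
    μ[potentialOutcome Y1 Ym1 D * agreement A D | m]
      =ᵐ[μ] μ[potentialOutcome Y1 Ym1 D | m] * μ[agreement A D | m] := by
  have hlevel := ae_condExp_potentialOutcome_mul_agreement_of_eq huncf hA hY1 hYm1 hD hint
  filter_upwards [hlevel 1, hlevel (-1)] with ω h1 hm1
  rcases hDval ω with h | h
  exacts [h1 h, hm1 h]

end CausalInference

theorem aipw_correct_outcome_model_general
    {Ω 𝓧 : Type*} [MeasurableSpace Ω] [StandardBorelSpace Ω]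
    [MeasurableSpace 𝓧]
    (μ : Measure Ω) [IsProbabilityMeasure μ]
    (X : Ω → 𝓧) (hX : Measurable X)
    (A : Ω → ℝ) (hA : Measurable A)
    (Y1 Ym1 Y : Ω → ℝ) (hY1 : Measurable Y1) (hYm1 : Measurable Ym1)
    -- consistency
    (hcons : ∀ ω, Y ω = (if A ω = 1 then Y1 ω else Ym1 ω))
    -- unconfoundedness
    (huncf : CondIndepFun (MeasurableSpace.comap X inferInstance) hX.comap_le
      A (fun ω => (Y1 ω, Ym1 ω)) μ)
    -- treatment rule
    (d : 𝓧 → ℝ) (hd : Measurable d) (hdval : ∀ x, d x = 1 ∨ d x = -1)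
    -- positivity of the true propensity score
    (hpos : ∀ᵐ ω ∂μ,
      0 < (μ[(fun ω' => if A ω' = d (X ω') then (1:ℝ) else 0) |
            MeasurableSpace.comap X inferInstance]) ω ∧
      (μ[(fun ω' => if A ω' = d (X ω') then (1:ℝ) else 0) |
            MeasurableSpace.comap X inferInstance]) ω < 1)
    -- arbitrary working propensity function, bounded away from 0 and 1
    (π : 𝓧 → ℝ) (hπmeas : Measurable π) (ε : ℝ) (hε : 0 < ε)
    (hπpos : ∀ᵐ ω ∂μ, ε < π (X ω) ∧ π (X ω) < 1 - ε)
    -- correctly specified outcome model: Q(X,d(X)) = E[Y | X, A = d(X)] a.s.,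
    -- characterized by E[Y·1{A=d(X)} | X] = Q(X) · E[1{A=d(X)} | X] a.s.
    (Q : 𝓧 → ℝ) (hQmeas : Measurable Q)
    (hQint : Integrable (fun ω => Q (X ω)) μ)
    (hQcorrect :
      μ[(fun ω => Y ω * (if A ω = d (X ω) then (1:ℝ) else 0)) |
          MeasurableSpace.comap X inferInstance]
        =ᵐ[μ] fun ω => Q (X ω) *
          (μ[(fun ω' => if A ω' = d (X ω') then (1:ℝ) else 0) |
              MeasurableSpace.comap X inferInstance]) ω)
    -- integrability as needed
    (hint1 : Integrable (fun ω => if d (X ω) = 1 then Y1 ω else Ym1 ω) μ)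
    (hint3 : Integrable (fun ω => Y ω * (if A ω = d (X ω) then (1:ℝ) else 0)) μ) :
    ∫ ω, (Y ω * (if A ω = d (X ω) then (1:ℝ) else 0) / π (X ω)
        - ((if A ω = d (X ω) then (1:ℝ) else 0) - π (X ω)) / π (X ω) * Q (X ω)) ∂μ
      = ∫ ω, (if d (X ω) = 1 then Y1 ω else Ym1 ω) ∂μ := by
  set 𝓖 : MeasurableSpace Ω := MeasurableSpace.comap X inferInstance
  have hm : 𝓖 ≤ _ := hX.comap_le
  have hXm : Measurable[𝓖] X := comap_measurable X
  have hconsW : (fun ω => Y ω * agreement A (d ∘ X) ω)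
      = potentialOutcome Y1 Ym1 (d ∘ X) * agreement A (d ∘ X) := by
    rw [← potentialOutcome_mul_agreement, show Y = potentialOutcome Y1 Ym1 A from funext hcons]
    rfl
  have hQ_eq : (fun ω => Q (X ω)) =ᵐ[μ] μ[potentialOutcome Y1 Ym1 (d ∘ X) | 𝓖] := by
    filter_upwards [hQcorrect, hpos, condExp_potentialOutcome_mul_agreement huncf hA hY1 hYm1
      (hd.comp hXm) (fun ω => hdval (X ω)) hint1] with ω hQω hposω hfactor
    change μ[fun ω => Y ω * agreement A (d ∘ X) ω | 𝓖] ω = _ at hQω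
    rw [hconsW, hfactor] at hQω
    exact mul_right_cancel₀ hposω.1.ne' hQω.symm
  calc _ = ∫ ω, Q (X ω) ∂μ :=
        integral_aipw_eq_integral_outcomeModel hm (hπmeas.comp hXm) hε (hπpos.mono fun _ h => h.1)
          (hQmeas.comp hXm) hQint (measurable_agreement hA (hd.comp hX)).aestronglyMeasurable
          norm_agreement_le hint3 hQcorrect
    _ = ∫ ω, μ[potentialOutcome Y1 Ym1 (d ∘ X) | 𝓖] ω ∂μ := integral_congr_ae hQ_eq
    _ = _ := integral_condExp hm

/-- If the outcome model is correctly specified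
(`Q(X,d(X)) = E[Y | X, A=d(X)]` a.s., characterized by
`E[Y·1{A=d(X)} | X] = Q(X)·P(A=d(X)|X)` a.s.), then for any measurable working
propensity function `π(d(X),X)` taking values in `(ε, 1-ε)`, the AIPW functional
equals the value `V(d) = E[Y(d)]`.  Together with the previous statement this is
double robustness. -/
theorem aipw_correct_outcome_model
    {Ω 𝓧 : Type*} [MeasurableSpace Ω] [StandardBorelSpace Ω] [Nonempty Ω]
    [MeasurableSpace 𝓧]
    (μ : Measure Ω) [IsProbabilityMeasure μ]
    (X : Ω → 𝓧) (hX : Measurable X)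
    (A : Ω → ℝ) (hA : Measurable A) (hAval : ∀ ω, A ω = 1 ∨ A ω = -1)
    (Y1 Ym1 Y : Ω → ℝ) (hY1 : Measurable Y1) (hYm1 : Measurable Ym1)
    -- consistency
    (hcons : ∀ ω, Y ω = (if A ω = 1 then Y1 ω else Ym1 ω))
    -- unconfoundedness
    (huncf : CondIndepFun (MeasurableSpace.comap X inferInstance) hX.comap_le
      A (fun ω => (Y1 ω, Ym1 ω)) μ)
    -- treatment rule
    (d : 𝓧 → ℝ) (hd : Measurable d) (hdval : ∀ x, d x = 1 ∨ d x = -1)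
    -- positivity of the true propensity score
    (hpos : ∀ᵐ ω ∂μ,
      0 < (μ[(fun ω' => if A ω' = d (X ω') then (1:ℝ) else 0) |
            MeasurableSpace.comap X inferInstance]) ω ∧
      (μ[(fun ω' => if A ω' = d (X ω') then (1:ℝ) else 0) |
            MeasurableSpace.comap X inferInstance]) ω < 1)
    -- arbitrary working propensity function, bounded away from 0 and 1
    (π : 𝓧 → ℝ) (hπmeas : Measurable π) (ε : ℝ) (hε : 0 < ε)
    (hπpos : ∀ᵐ ω ∂μ, ε < π (X ω) ∧ π (X ω) < 1 - ε)
    -- correctly specified outcome model: Q(X,d(X)) = E[Y | X, A = d(X)] a.s.,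
    -- characterized by E[Y·1{A=d(X)} | X] = Q(X) · E[1{A=d(X)} | X] a.s.
    (Q : 𝓧 → ℝ) (hQmeas : Measurable Q)
    (hQint : Integrable (fun ω => Q (X ω)) μ)
    (hQcorrect :
      μ[(fun ω => Y ω * (if A ω = d (X ω) then (1:ℝ) else 0)) |
          MeasurableSpace.comap X inferInstance]
        =ᵐ[μ] fun ω => Q (X ω) *
          (μ[(fun ω' => if A ω' = d (X ω') then (1:ℝ) else 0) |
              MeasurableSpace.comap X inferInstance]) ω)
    -- integrability as needed
    (hint1 : Integrable (fun ω => if d (X ω) = 1 then Y1 ω else Ym1 ω) μ)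
    (hint2 : Integrable (fun ω =>
      Y ω * (if A ω = d (X ω) then (1:ℝ) else 0) / π (X ω)
        - ((if A ω = d (X ω) then (1:ℝ) else 0) - π (X ω)) / π (X ω) * Q (X ω)) μ)
    (hint3 : Integrable (fun ω => Y ω * (if A ω = d (X ω) then (1:ℝ) else 0)) μ) :
    ∫ ω, (Y ω * (if A ω = d (X ω) then (1:ℝ) else 0) / π (X ω)
        - ((if A ω = d (X ω) then (1:ℝ) else 0) - π (X ω)) / π (X ω) * Q (X ω)) ∂μ
      = ∫ ω, (if d (X ω) = 1 then Y1 ω else Ym1 ω) ∂μ :=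
  aipw_correct_outcome_model_general μ X hX A hA Y1 Ym1 Y hY1 hYm1 hcons huncf d hd hdval hpos π
    hπmeas ε hε hπpos Q hQmeas hQint hQcorrect hint1 hint3
end

section
/- Let φ(β) = Y·1{A=d(X)}/π₀ − (1{A=d(X)} − π₀)/π₀ · Q(X,d(X);β) − V(d), where π₀ = P(A=d(X)|X) is the true propensity score. Then the variance E[φ(β)²] decomposes as E[φ(β)²] = E[φ*²] + E[ (1−π₀)/π₀ · (Q(X,d(X);β) − E[Y|X,A=d(X)])² ], where φ* is φ evaluated at the true conditional mean Q*(X) = E[Y|X,A=d(X)]. Consequently β minimizing E[φ(β)²] over correctly-specified model classes is attained at the true outcome regression, and for any β the variance with an incorrect Q exceeds the variance with the true Q. -/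
/-!
Write `I = 1{A = d(X)}`, `π = E[I | X]` and `T_Q = Y I / π - (I - π) / π * Q`. Changing the
outcome model adds an `X`-measurable multiple of the centred indicator:
`T_Q - T_{Q*} = (Q - Q*) / π * (π - I)`. Given `X`, `π - I` has mean `0` and second moment
`π (1 - π)`, and it is uncorrelated with `T_{Q*}`: since `E[Y I | X] = Q* π`, the score `T_{Q*}`
has conditional mean `Q*` on both arms (`E[T_{Q*} I | X] = π Q*`, `T_{Q*} (1 - I) = Q* (1 - I)`).
Pythagoras in `L²` then gives `E[(T_Q - V)²] = E[(T_{Q*} - V)²] + E[(1 - π) / π * (Q - Q*)²]`.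
-/

open MeasureTheory ProbabilityTheory

theorem norm_le_one_of_mem_Icc {x : ℝ} (hx : x ∈ Set.Icc 0 1) : ‖x‖ ≤ 1 := by
  rw [Real.norm_of_nonneg hx.1]; exact hx.2

theorem norm_one_sub_le_one_of_mem_Icc {x : ℝ} (hx : x ∈ Set.Icc 0 1) : ‖1 - x‖ ≤ 1 :=
  norm_le_one_of_mem_Icc ⟨sub_nonneg.2 hx.2, by linarith [hx.1]⟩

theorem mem_Icc_of_eq_zero_or_eq_one {x : ℝ} (hx : x = 0 ∨ x = 1) : x ∈ Set.Icc 0 1 := by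
  rcases hx with rfl | rfl <;> simp

section

variable {Ω : Type*} {m m0 : MeasurableSpace Ω} {μ : Measure Ω}

theorem integral_add_sq_of_integral_mul_eq_zero {f g : Ω → ℝ} (hf : MemLp f 2 μ)
    (hg : MemLp g 2 μ) (hfg : ∫ ω, f ω * g ω ∂μ = 0) :
    ∫ ω, (f ω + g ω) ^ 2 ∂μ = ∫ ω, f ω ^ 2 ∂μ + ∫ ω, g ω ^ 2 ∂μ := by
  have hfg' : Integrable (fun ω => 2 * (f ω * g ω)) μ := (hf.integrable_mul hg).const_mul 2
  have hsum : Integrable (fun ω => f ω ^ 2 + 2 * (f ω * g ω)) μ := hf.integrable_sq.add hfg'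
  calc ∫ ω, (f ω + g ω) ^ 2 ∂μ
      = ∫ ω, (f ω ^ 2 + 2 * (f ω * g ω) + g ω ^ 2) ∂μ := by
        congr 1 with ω; ring
    _ = ∫ ω, f ω ^ 2 ∂μ + ∫ ω, g ω ^ 2 ∂μ := by
        rw [integral_add hsum hg.integrable_sq,
          integral_add hf.integrable_sq hfg', integral_const_mul, hfg, mul_zero, add_zero]

theorem integral_mul_eq_of_condExp_ae_eq (hm : m ≤ m0) [SigmaFinite (μ.trim hm)]
    {c f g : Ω → ℝ} (hc : StronglyMeasurable[m] c) (hf : Integrable f μ)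
    (hcf : Integrable (c * f) μ) (hfg : μ[f|m] =ᵐ[μ] g) :
    ∫ ω, c ω * f ω ∂μ = ∫ ω, c ω * g ω ∂μ := by
  refine (integral_condExp hm (f := c * f)).symm.trans (integral_congr_ae ?_)
  filter_upwards [condExp_mul_of_stronglyMeasurable_left hc hcf hf, hfg] with ω hcf hf
  rw [hcf, Pi.mul_apply, hf]

theorem condExp_sub_ae_eq_zero (hm : m ≤ m0) [SigmaFinite (μ.trim hm)] {f g : Ω → ℝ}
    (hf : Integrable f μ) (hg : StronglyMeasurable[m] g) (hfg : μ[f|m] =ᵐ[μ] g) :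
    μ[g - f|m] =ᵐ[μ] 0 := by
  have hg_int : Integrable g μ := integrable_condExp.congr hfg
  filter_upwards [condExp_sub hg_int hf m, hfg] with ω hsub hfg
  rw [hsub, Pi.sub_apply, condExp_of_stronglyMeasurable hm hg hg_int, hfg, sub_self, Pi.zero_apply]

variable {I π : Ω → ℝ}

theorem condExp_sub_sq_ae_eq_mul_one_sub (hm : m ≤ m0) [IsFiniteMeasure μ]
    (hI : AEStronglyMeasurable I μ) (hI01 : ∀ ω, I ω = 0 ∨ I ω = 1)
    (hπm : StronglyMeasurable[m] π) (hπ : ∀ᵐ ω ∂μ, 0 ≤ π ω ∧ π ω ≤ 1)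
    (hEI : μ[I|m] =ᵐ[μ] π) :
    μ[(π - I) ^ 2|m] =ᵐ[μ] π * (1 - π) := by
  have hsq : (π - I) ^ 2 = π * (π - I) + (1 - π) * I := funext fun ω => by
    rcases hI01 ω with h | h <;> simp only [Pi.add_apply, Pi.mul_apply, Pi.sub_apply,
      Pi.pow_apply, Pi.one_apply, h] <;> ring
  have hIint : Integrable I μ :=
    .of_bound hI 1 (ae_of_all _ fun ω =>
      norm_le_one_of_mem_Icc (mem_Icc_of_eq_zero_or_eq_one (hI01 ω)))
  have hπI : Integrable (π - I) μ := (integrable_condExp.congr hEI).sub hIint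
  have hπ' := (hπm.mono hm).aestronglyMeasurable (μ := μ)
  have hπ_mul : Integrable (π * (π - I)) μ :=
    hπI.bdd_mul hπ' (hπ.mono fun ω h => norm_le_one_of_mem_Icc h)
  have h1π_mul : Integrable ((1 - π) * I) μ :=
    hIint.bdd_mul (aestronglyMeasurable_const.sub hπ') (hπ.mono fun ω h =>
      norm_one_sub_le_one_of_mem_Icc h)
  rw [hsq]
  filter_upwards [condExp_add hπ_mul h1π_mul m,
    condExp_mul_of_stronglyMeasurable_left hπm hπ_mul hπI,
    condExp_mul_of_stronglyMeasurable_left (stronglyMeasurable_one.sub hπm) h1π_mul hIint,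
    condExp_sub_ae_eq_zero hm hIint hπm hEI, hEI] with ω hadd hπ_pull h1π_pull hπI_zero hEI
  rw [hadd, Pi.add_apply, hπ_pull, h1π_pull, Pi.mul_apply, Pi.mul_apply, hπI_zero, hEI,
    Pi.zero_apply, mul_zero, zero_add]
  exact mul_comm _ _

variable (Y I π Q : Ω → ℝ) in
noncomputable def aipw : Ω → ℝ := Y * I / π - (I - π) / π * Q

theorem aipw_sub_aipw (Y Q Q' : Ω → ℝ) :
    aipw Y I π Q' - aipw Y I π Q = (Q' - Q) / π * (π - I) := by
  funext ω; simp only [aipw, Pi.sub_apply, Pi.mul_apply, Pi.div_apply]; ring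

theorem aipw_mul_one_sub_ae_eq (Y Q : Ω → ℝ) (hI01 : ∀ ω, I ω = 0 ∨ I ω = 1)
    (hπ : ∀ᵐ ω ∂μ, π ω ≠ 0) :
    aipw Y I π Q * (1 - I) =ᵐ[μ] Q * (1 - I) := by
  filter_upwards [hπ] with ω hπ
  rcases hI01 ω with h | h <;> simp only [aipw, Pi.sub_apply, Pi.mul_apply, Pi.div_apply,
    Pi.one_apply, h] <;> field_simp <;> ring

/-- If `Y * I` were not integrable, `μ[Y * I|m]` would be the junk value `0`, forcing `Q = 0`
a.e. and hence `Y * I = π * aipw Y I π Q`, which is integrable. -/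
theorem integrable_mul_of_condExp_mul_ae_eq {Y Q : Ω → ℝ} (hπm : AEStronglyMeasurable π μ)
    (hπ : ∀ᵐ ω ∂μ, 0 < π ω ∧ π ω ≤ 1) (hT : Integrable (aipw Y I π Q) μ)
    (hEYI : μ[Y * I|m] =ᵐ[μ] Q * π) :
    Integrable (Y * I) μ := by
  by_contra hYI
  rw [condExp_of_not_integrable hYI] at hEYI
  have hπb : ∀ᵐ ω ∂μ, ‖π ω‖ ≤ 1 := hπ.mono fun ω h => norm_le_one_of_mem_Icc ⟨h.1.le, h.2⟩
  refine hYI ((hT.bdd_mul hπm hπb).congr ?_)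
  filter_upwards [hEYI, hπ] with ω hQπ hπ
  have hπ0 : π ω ≠ 0 := hπ.1.ne'
  have hQ : Q ω = 0 := by simpa [hπ0] using hQπ.symm
  simp only [aipw, Pi.sub_apply, Pi.mul_apply, Pi.div_apply, hQ, mul_zero, sub_zero]
  field_simp

theorem condExp_aipw_mul_ae_eq (hm : m ≤ m0) [IsFiniteMeasure μ] {Y Q : Ω → ℝ}
    (hI : AEStronglyMeasurable I μ) (hI01 : ∀ ω, I ω = 0 ∨ I ω = 1)
    (hπm : StronglyMeasurable[m] π) (hπ : ∀ᵐ ω ∂μ, 0 < π ω ∧ π ω ≤ 1)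
    (hEI : μ[I|m] =ᵐ[μ] π) (hQ : StronglyMeasurable[m] Q) (hT : Integrable (aipw Y I π Q) μ)
    (hEYI : μ[Y * I|m] =ᵐ[μ] Q * π) :
    μ[aipw Y I π Q * I|m] =ᵐ[μ] π * Q := by
  set T := aipw Y I π Q
  have hIb : ∀ᵐ ω ∂μ, ‖I ω‖ ≤ 1 :=
    ae_of_all _ fun ω => norm_le_one_of_mem_Icc (mem_Icc_of_eq_zero_or_eq_one (hI01 ω))
  have hπ' := (hπm.mono hm).aestronglyMeasurable (μ := μ)
  have hTI : Integrable (T * I) μ := hT.mul_bdd hI hIb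
  have hπTI : Integrable (π * (T * I)) μ :=
    hTI.bdd_mul hπ' (hπ.mono fun ω h => norm_le_one_of_mem_Icc ⟨h.1.le, h.2⟩)
  have hYI := integrable_mul_of_condExp_mul_ae_eq hπ' hπ hT hEYI
  have hsplit : π * (T * I) =ᵐ[μ] Y * I - ((1 - π) * Q) * I := by
    filter_upwards [hπ] with ω hπ
    have hπ0 : π ω ≠ 0 := hπ.1.ne'
    rcases hI01 ω with h | h <;> simp only [T, aipw, Pi.sub_apply, Pi.mul_apply, Pi.div_apply,
      Pi.one_apply, h] <;> field_simp
    ring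
  have hQI : Integrable (((1 - π) * Q) * I) μ :=
    (hYI.sub hπTI).congr (hsplit.mono fun ω h => by simp only [Pi.sub_apply, h]; ring)
  filter_upwards [condExp_mul_of_stronglyMeasurable_left hπm hπTI hTI, condExp_congr_ae hsplit,
    condExp_sub hYI hQI m, hEYI,
    condExp_mul_of_stronglyMeasurable_left ((stronglyMeasurable_one.sub hπm).mul hQ) hQI
      (.of_bound hI 1 hIb),
    hEI, hπ] with ω hπ_pull hsplit hsub hEYI hQ_pull hEI hπ
  rw [Pi.mul_apply] at hπ_pull ⊢
  refine mul_left_cancel₀ hπ.1.ne' ?_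
  rw [← hπ_pull, hsplit, hsub, Pi.sub_apply, hEYI, hQ_pull]
  simp only [Pi.mul_apply, Pi.sub_apply, Pi.one_apply, hEI]
  ring

theorem condExp_aipw_mul_sub_ae_eq_zero (hm : m ≤ m0) [IsFiniteMeasure μ] {Y Q : Ω → ℝ}
    (hI : AEStronglyMeasurable I μ) (hI01 : ∀ ω, I ω = 0 ∨ I ω = 1)
    (hπm : StronglyMeasurable[m] π) (hπ : ∀ᵐ ω ∂μ, 0 < π ω ∧ π ω ≤ 1)
    (hEI : μ[I|m] =ᵐ[μ] π) (hQ : StronglyMeasurable[m] Q) (hT : Integrable (aipw Y I π Q) μ)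
    (hEYI : μ[Y * I|m] =ᵐ[μ] Q * π) :
    μ[aipw Y I π Q * (π - I)|m] =ᵐ[μ] 0 := by
  set T := aipw Y I π Q
  have hIb : ∀ᵐ ω ∂μ, ‖I ω‖ ≤ 1 :=
    ae_of_all _ fun ω => norm_le_one_of_mem_Icc (mem_Icc_of_eq_zero_or_eq_one (hI01 ω))
  have hπ' := (hπm.mono hm).aestronglyMeasurable (μ := μ)
  have hIint : Integrable I μ := .of_bound hI 1 hIb
  have hT1I_eq := aipw_mul_one_sub_ae_eq (μ := μ) Y Q hI01 (hπ.mono fun ω h => h.1.ne')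
  have hT1I : Integrable (T * (1 - I)) μ := hT.mul_bdd (aestronglyMeasurable_const.sub hI)
    (ae_of_all _ fun ω => norm_one_sub_le_one_of_mem_Icc (mem_Icc_of_eq_zero_or_eq_one (hI01 ω)))
  have hTI : Integrable (T * I) μ := hT.mul_bdd hI hIb
  have hπT1I : Integrable (π * (T * (1 - I))) μ :=
    hT1I.bdd_mul hπ' (hπ.mono fun ω h => norm_le_one_of_mem_Icc ⟨h.1.le, h.2⟩)
  have h1πTI : Integrable ((1 - π) * (T * I)) μ :=
    hTI.bdd_mul (aestronglyMeasurable_const.sub hπ') (hπ.mono fun ω h =>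
      norm_one_sub_le_one_of_mem_Icc ⟨h.1.le, h.2⟩)
  have hE1 : μ[(1 : Ω → ℝ)|m] = 1 := condExp_const hm 1
  rw [show T * (π - I) = π * (T * (1 - I)) - (1 - π) * (T * I) by ring]
  filter_upwards [condExp_sub hπT1I h1πTI m,
    condExp_mul_of_stronglyMeasurable_left hπm hπT1I hT1I,
    condExp_mul_of_stronglyMeasurable_left (stronglyMeasurable_one.sub hπm) h1πTI hTI,
    condExp_congr_ae (m := m) hT1I_eq,
    condExp_mul_of_stronglyMeasurable_left hQ (hT1I.congr hT1I_eq)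
      ((integrable_const 1).sub hIint),
    condExp_sub (f := 1) (integrable_const 1) hIint m, hEI,
    condExp_aipw_mul_ae_eq hm hI hI01 hπm hπ hEI hQ hT hEYI]
    with ω hsub hπ_pull h1π_pull hT1I_eq hQ_pull h1I_sub hEI hTI_eq
  rw [hsub, Pi.sub_apply, hπ_pull, h1π_pull, Pi.mul_apply, Pi.mul_apply, hT1I_eq, hQ_pull,
    hTI_eq, Pi.mul_apply, h1I_sub, Pi.sub_apply, hEI, hE1]
  simp only [Pi.mul_apply, Pi.sub_apply, Pi.one_apply, Pi.zero_apply]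
  ring

theorem integral_aipw_sub_const_mul_eq_zero (hm : m ≤ m0) [IsFiniteMeasure μ]
    {Y Q c : Ω → ℝ}
    (hI : AEStronglyMeasurable I μ) (hI01 : ∀ ω, I ω = 0 ∨ I ω = 1)
    (hπm : StronglyMeasurable[m] π) (hπ : ∀ᵐ ω ∂μ, 0 < π ω ∧ π ω ≤ 1)
    (hEI : μ[I|m] =ᵐ[μ] π) (hQ : StronglyMeasurable[m] Q) (hc : StronglyMeasurable[m] c)
    (hT : MemLp (aipw Y I π Q) 2 μ) (hg : MemLp (c * (π - I)) 2 μ)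
    (hEYI : μ[Y * I|m] =ᵐ[μ] Q * π) (V : ℝ) :
    ∫ ω, (aipw Y I π Q ω - V) * (c * (π - I)) ω ∂μ = 0 := by
  set T := aipw Y I π Q
  have hIint : Integrable I μ :=
    .of_bound hI 1 (ae_of_all _ fun ω =>
      norm_le_one_of_mem_Icc (mem_Icc_of_eq_zero_or_eq_one (hI01 ω)))
  have hπI : Integrable (π - I) μ := (integrable_condExp.congr hEI).sub hIint
  have hπI_bdd : ∀ᵐ ω ∂μ, ‖π ω - I ω‖ ≤ 1 := by
    filter_upwards [hπ] with ω h
    rw [Real.norm_eq_abs, abs_le]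
    rcases hI01 ω with hI | hI <;> rw [hI] <;> constructor <;> linarith
  have hTπI : Integrable (T * (π - I)) μ := (hT.integrable one_le_two).mul_bdd hπI.1 hπI_bdd
  have hTg : Integrable (c * (T * (π - I))) μ :=
    (hT.integrable_mul hg).congr (ae_of_all _ fun ω => by simp only [Pi.mul_apply]; ring)
  have hTg0 := integral_mul_eq_of_condExp_ae_eq hm hc hTπI hTg
    (condExp_aipw_mul_sub_ae_eq_zero hm hI hI01 hπm hπ hEI hQ (hT.integrable one_le_two) hEYI)
  have hg0 := integral_mul_eq_of_condExp_ae_eq hm hc hπI (hg.integrable one_le_two)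
    (condExp_sub_ae_eq_zero hm hIint hπm hEI)
  calc ∫ ω, (T ω - V) * (c * (π - I)) ω ∂μ
      = ∫ ω, (c ω * (T * (π - I)) ω - V * (c ω * (π - I) ω)) ∂μ := by
        congr 1 with ω; simp only [Pi.mul_apply, Pi.sub_apply]; ring
    _ = 0 := by
        rw [integral_sub (f := fun ω => c ω * (T * (π - I)) ω)
          (g := fun ω => V * (c ω * (π - I) ω)) hTg ((hg.integrable one_le_two).const_mul V),
          integral_const_mul, hTg0, hg0]
        simp

theorem integral_mul_sub_sq (hm : m ≤ m0) [IsFiniteMeasure μ] {c : Ω → ℝ}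
    (hI : AEStronglyMeasurable I μ) (hI01 : ∀ ω, I ω = 0 ∨ I ω = 1)
    (hπm : StronglyMeasurable[m] π) (hπ : ∀ᵐ ω ∂μ, 0 ≤ π ω ∧ π ω ≤ 1)
    (hEI : μ[I|m] =ᵐ[μ] π) (hc : StronglyMeasurable[m] c) (hg : MemLp (c * (π - I)) 2 μ) :
    ∫ ω, (c * (π - I)) ω ^ 2 ∂μ = ∫ ω, c ω ^ 2 * (π ω * (1 - π ω)) ∂μ := by
  have hsq_int : Integrable ((π - I) ^ 2) μ := by
    refine .of_bound (((hπm.mono hm).aestronglyMeasurable.sub hI).pow 2) 1 ?_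
    filter_upwards [hπ] with ω h
    rw [Pi.pow_apply, norm_pow]
    refine pow_le_one₀ (norm_nonneg _) ?_
    rw [Real.norm_eq_abs, abs_le]
    rcases hI01 ω with hI | hI <;> simp only [Pi.sub_apply, hI] <;> constructor <;> linarith
  calc ∫ ω, (c * (π - I)) ω ^ 2 ∂μ = ∫ ω, (c * c) ω * ((π - I) ^ 2) ω ∂μ := by
        congr 1 with ω; simp only [Pi.mul_apply, Pi.pow_apply]; ring
    _ = ∫ ω, (c * c) ω * (π * (1 - π)) ω ∂μ :=
        integral_mul_eq_of_condExp_ae_eq hm (hc.mul hc) hsq_int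
          (hg.integrable_sq.congr (ae_of_all _ fun ω => by
            simp only [Pi.mul_apply, Pi.pow_apply]; ring))
          (condExp_sub_sq_ae_eq_mul_one_sub hm hI hI01 hπm hπ hEI)
    _ = ∫ ω, c ω ^ 2 * (π ω * (1 - π ω)) ∂μ := by
        congr 1 with ω; simp only [Pi.mul_apply, Pi.sub_apply, Pi.one_apply]; ring

theorem integral_aipw_sub_sq (hm : m ≤ m0) [IsFiniteMeasure μ] {Y Q Q' : Ω → ℝ}
    (hI : AEStronglyMeasurable I μ) (hI01 : ∀ ω, I ω = 0 ∨ I ω = 1)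
    (hπm : StronglyMeasurable[m] π) (hπ : ∀ᵐ ω ∂μ, 0 < π ω ∧ π ω ≤ 1)
    (hEI : μ[I|m] =ᵐ[μ] π) (hQ : StronglyMeasurable[m] Q) (hQ' : StronglyMeasurable[m] Q')
    (hT : MemLp (aipw Y I π Q) 2 μ) (hT' : MemLp (aipw Y I π Q') 2 μ)
    (hEYI : μ[Y * I|m] =ᵐ[μ] Q * π) (V : ℝ) :
    ∫ ω, (aipw Y I π Q' ω - V) ^ 2 ∂μ
      = ∫ ω, (aipw Y I π Q ω - V) ^ 2 ∂μ
        + ∫ ω, (1 - π ω) / π ω * (Q' ω - Q ω) ^ 2 ∂μ := by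
  set c := (Q' - Q) / π
  have hc : StronglyMeasurable[m] c := (hQ'.sub hQ).div hπm
  have hg : MemLp (c * (π - I)) 2 μ := aipw_sub_aipw (I := I) Y Q Q' ▸ hT'.sub hT
  have hW : ∫ ω, c ω ^ 2 * (π ω * (1 - π ω)) ∂μ
      = ∫ ω, (1 - π ω) / π ω * (Q' ω - Q ω) ^ 2 ∂μ := by
    refine integral_congr_ae ?_
    filter_upwards [hπ] with ω h
    have hπ0 : π ω ≠ 0 := h.1.ne'
    simp only [c, Pi.div_apply, Pi.sub_apply]
    field_simp
  calc ∫ ω, (aipw Y I π Q' ω - V) ^ 2 ∂μ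
      = ∫ ω, ((aipw Y I π Q ω - V) + (c * (π - I)) ω) ^ 2 ∂μ := by
        congr 1 with ω
        rw [← aipw_sub_aipw Y Q Q', Pi.sub_apply]; ring
    _ = _ := by
        rw [integral_add_sq_of_integral_mul_eq_zero (f := fun ω => aipw Y I π Q ω - V)
          (hT.sub (memLp_const V)) hg
          (integral_aipw_sub_const_mul_eq_zero hm hI hI01 hπm hπ hEI hQ hc hT hg hEYI V),
          integral_mul_sub_sq hm hI hI01 hπm (hπ.mono fun ω h => ⟨h.1.le, h.2⟩) hEI hc hg,
          hW]

end

theorem aipw_variance_decomposition_general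
    {Ω 𝓧 B : Type*} [MeasurableSpace Ω]
    [MeasurableSpace 𝓧]
    (μ : Measure Ω) [IsProbabilityMeasure μ]
    (X : Ω → 𝓧) (hX : Measurable X)
    (A : Ω → ℝ) (hA : Measurable A)
    (Y1 Ym1 Y : Ω → ℝ)
    -- treatment rule
    (d : 𝓧 → ℝ) (hd : Measurable d)
    -- true propensity score π₀(X) = P(A = d(X) | X), with positivity
    (π0 : 𝓧 → ℝ) (hπ0meas : Measurable π0)
    (hπ0pos : ∀ᵐ ω ∂μ, 0 < π0 (X ω) ∧ π0 (X ω) < 1)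
    (hπ0 : (fun ω => π0 (X ω)) =ᵐ[μ]
      μ[(fun ω => if A ω = d (X ω) then (1:ℝ) else 0) |
        MeasurableSpace.comap X inferInstance])
    -- true outcome regression Q*(X) = E[Y | X, A = d(X)], characterized by
    -- E[Y·1{A=d(X)} | X] = Q*(X)·π₀(X) a.s.
    (Qstar : 𝓧 → ℝ) (hQstarmeas : Measurable Qstar)
    (hQstar :
      μ[(fun ω => Y ω * (if A ω = d (X ω) then (1:ℝ) else 0)) |
          MeasurableSpace.comap X inferInstance]
        =ᵐ[μ] fun ω => Qstar (X ω) * π0 (X ω))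
    -- working outcome model Q(x, d(x); β)
    (Q : B → 𝓧 → ℝ) (hQmeas : ∀ β, Measurable (Q β))
    -- finite second moments as needed
    (hL2 : ∀ β, MemLp (fun ω =>
      Y ω * (if A ω = d (X ω) then (1:ℝ) else 0) / π0 (X ω)
        - ((if A ω = d (X ω) then (1:ℝ) else 0) - π0 (X ω)) / π0 (X ω) * Q β (X ω)) 2 μ)
    (hL2star : MemLp (fun ω =>
      Y ω * (if A ω = d (X ω) then (1:ℝ) else 0) / π0 (X ω)
        - ((if A ω = d (X ω) then (1:ℝ) else 0) - π0 (X ω)) / π0 (X ω) * Qstar (X ω)) 2 μ) :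
    ∀ β : B,
      (∫ ω, (Y ω * (if A ω = d (X ω) then (1:ℝ) else 0) / π0 (X ω)
          - ((if A ω = d (X ω) then (1:ℝ) else 0) - π0 (X ω)) / π0 (X ω) * Q β (X ω)
          - ∫ ω', (if d (X ω') = 1 then Y1 ω' else Ym1 ω') ∂μ) ^ 2 ∂μ
        = (∫ ω, (Y ω * (if A ω = d (X ω) then (1:ℝ) else 0) / π0 (X ω)
            - ((if A ω = d (X ω) then (1:ℝ) else 0) - π0 (X ω)) / π0 (X ω) * Qstar (X ω)
            - ∫ ω', (if d (X ω') = 1 then Y1 ω' else Ym1 ω') ∂μ) ^ 2 ∂μ)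
          + ∫ ω, (1 - π0 (X ω)) / π0 (X ω) * (Q β (X ω) - Qstar (X ω)) ^ 2 ∂μ)
      ∧
      (∫ ω, (Y ω * (if A ω = d (X ω) then (1:ℝ) else 0) / π0 (X ω)
          - ((if A ω = d (X ω) then (1:ℝ) else 0) - π0 (X ω)) / π0 (X ω) * Qstar (X ω)
          - ∫ ω', (if d (X ω') = 1 then Y1 ω' else Ym1 ω') ∂μ) ^ 2 ∂μ)
        ≤ ∫ ω, (Y ω * (if A ω = d (X ω) then (1:ℝ) else 0) / π0 (X ω)
            - ((if A ω = d (X ω) then (1:ℝ) else 0) - π0 (X ω)) / π0 (X ω) * Q β (X ω)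
            - ∫ ω', (if d (X ω') = 1 then Y1 ω' else Ym1 ω') ∂μ) ^ 2 ∂μ := by
  intro β
  have hXm := comap_measurable (m := (inferInstance : MeasurableSpace 𝓧)) X
  have hI : Measurable fun ω => if A ω = d (X ω) then (1 : ℝ) else 0 :=
    Measurable.ite (measurableSet_eq_fun hA (hd.comp hX)) measurable_const measurable_const
  have hdecomp := integral_aipw_sub_sq (Y := Y) (I := fun ω => if A ω = d (X ω) then 1 else 0)
    (π := fun ω => π0 (X ω)) (Q := fun ω => Qstar (X ω)) (Q' := fun ω => Q β (X ω))
    hX.comap_le hI.aestronglyMeasurable (fun ω => by split_ifs <;> simp)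
    (hπ0meas.comp hXm).stronglyMeasurable (hπ0pos.mono fun ω h => ⟨h.1, h.2.le⟩) hπ0.symm
    (hQstarmeas.comp hXm).stronglyMeasurable ((hQmeas β).comp hXm).stronglyMeasurable
    hL2star (hL2 β) hQstar (∫ ω, (if d (X ω) = 1 then Y1 ω else Ym1 ω) ∂μ)
  refine ⟨hdecomp, hdecomp ▸ le_add_of_nonneg_right (integral_nonneg_of_ae ?_)⟩
  filter_upwards [hπ0pos] with ω h
  exact mul_nonneg (div_nonneg (sub_nonneg.2 h.2.le) h.1.le) (sq_nonneg _)

/-- With the true propensity score `π₀ = P(A=d(X)|X)` and true outcome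
regression `Q*(X) = E[Y|X,A=d(X)]`, the variance of the AIPW estimating function
decomposes as
`E[φ(β)²] = E[φ*²] + E[(1-π₀)/π₀ · (Q(X,d(X);β) - Q*(X))²]`,
so the variance with any working outcome model is at least the variance at the
true outcome regression. -/
theorem aipw_variance_decomposition
    {Ω 𝓧 B : Type*} [MeasurableSpace Ω] [StandardBorelSpace Ω] [Nonempty Ω]
    [MeasurableSpace 𝓧]
    (μ : Measure Ω) [IsProbabilityMeasure μ]
    (X : Ω → 𝓧) (hX : Measurable X)
    (A : Ω → ℝ) (hA : Measurable A) (hAval : ∀ ω, A ω = 1 ∨ A ω = -1)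
    (Y1 Ym1 Y : Ω → ℝ) (hY1 : Measurable Y1) (hYm1 : Measurable Ym1)
    -- consistency
    (hcons : ∀ ω, Y ω = (if A ω = 1 then Y1 ω else Ym1 ω))
    -- unconfoundedness
    (huncf : CondIndepFun (MeasurableSpace.comap X inferInstance) hX.comap_le
      A (fun ω => (Y1 ω, Ym1 ω)) μ)
    -- treatment rule
    (d : 𝓧 → ℝ) (hd : Measurable d) (hdval : ∀ x, d x = 1 ∨ d x = -1)
    -- true propensity score π₀(X) = P(A = d(X) | X), with positivity
    (π0 : 𝓧 → ℝ) (hπ0meas : Measurable π0)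
    (hπ0pos : ∀ᵐ ω ∂μ, 0 < π0 (X ω) ∧ π0 (X ω) < 1)
    (hπ0 : (fun ω => π0 (X ω)) =ᵐ[μ]
      μ[(fun ω => if A ω = d (X ω) then (1:ℝ) else 0) |
        MeasurableSpace.comap X inferInstance])
    -- true outcome regression Q*(X) = E[Y | X, A = d(X)], characterized by
    -- E[Y·1{A=d(X)} | X] = Q*(X)·π₀(X) a.s.
    (Qstar : 𝓧 → ℝ) (hQstarmeas : Measurable Qstar)
    (hQstar :
      μ[(fun ω => Y ω * (if A ω = d (X ω) then (1:ℝ) else 0)) |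
          MeasurableSpace.comap X inferInstance]
        =ᵐ[μ] fun ω => Qstar (X ω) * π0 (X ω))
    -- working outcome model Q(x, d(x); β)
    (Q : B → 𝓧 → ℝ) (hQmeas : ∀ β, Measurable (Q β))
    -- finite second moments as needed
    (hL2 : ∀ β, MemLp (fun ω =>
      Y ω * (if A ω = d (X ω) then (1:ℝ) else 0) / π0 (X ω)
        - ((if A ω = d (X ω) then (1:ℝ) else 0) - π0 (X ω)) / π0 (X ω) * Q β (X ω)) 2 μ)
    (hL2star : MemLp (fun ω =>
      Y ω * (if A ω = d (X ω) then (1:ℝ) else 0) / π0 (X ω)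
        - ((if A ω = d (X ω) then (1:ℝ) else 0) - π0 (X ω)) / π0 (X ω) * Qstar (X ω)) 2 μ)
    (hVint : Integrable (fun ω => if d (X ω) = 1 then Y1 ω else Ym1 ω) μ)
    (hWint : ∀ β, Integrable (fun ω =>
      (1 - π0 (X ω)) / π0 (X ω) * (Q β (X ω) - Qstar (X ω)) ^ 2) μ) :
    ∀ β : B,
      (∫ ω, (Y ω * (if A ω = d (X ω) then (1:ℝ) else 0) / π0 (X ω)
          - ((if A ω = d (X ω) then (1:ℝ) else 0) - π0 (X ω)) / π0 (X ω) * Q β (X ω)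
          - ∫ ω', (if d (X ω') = 1 then Y1 ω' else Ym1 ω') ∂μ) ^ 2 ∂μ
        = (∫ ω, (Y ω * (if A ω = d (X ω) then (1:ℝ) else 0) / π0 (X ω)
            - ((if A ω = d (X ω) then (1:ℝ) else 0) - π0 (X ω)) / π0 (X ω) * Qstar (X ω)
            - ∫ ω', (if d (X ω') = 1 then Y1 ω' else Ym1 ω') ∂μ) ^ 2 ∂μ)
          + ∫ ω, (1 - π0 (X ω)) / π0 (X ω) * (Q β (X ω) - Qstar (X ω)) ^ 2 ∂μ)
      ∧
      (∫ ω, (Y ω * (if A ω = d (X ω) then (1:ℝ) else 0) / π0 (X ω)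
          - ((if A ω = d (X ω) then (1:ℝ) else 0) - π0 (X ω)) / π0 (X ω) * Qstar (X ω)
          - ∫ ω', (if d (X ω') = 1 then Y1 ω' else Ym1 ω') ∂μ) ^ 2 ∂μ)
        ≤ ∫ ω, (Y ω * (if A ω = d (X ω) then (1:ℝ) else 0) / π0 (X ω)
            - ((if A ω = d (X ω) then (1:ℝ) else 0) - π0 (X ω)) / π0 (X ω) * Q β (X ω)
            - ∫ ω', (if d (X ω') = 1 then Y1 ω' else Ym1 ω') ∂μ) ^ 2 ∂μ :=
  aipw_variance_decomposition_general μ X hX A hA Y1 Ym1 Y d hd π0 hπ0meas hπ0pos hπ0 Qstar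
    hQstarmeas hQstar Q hQmeas hL2 hL2star
end

section
/- Suppose the outcome model is correct, Q(X,d(X);β₀) = E[Y|X, A=d(X)] a.s., and π(X;α) ∈ (0,1) is any measurable working propensity model satisfying the population covariate-balancing equation E[ (1{A=d(X)}/π(X;α) − (1−1{A=d(X)})/(1−π(X;α))) · h(X;α,β₀) ] = 0 with h containing the component (1 − π(X;α))·Q(X,d(X);β₀), together with the component π_α-free balancing terms of equation (5). Then the population AIPW functional E[ Y·1{A=d(X)}/π(X;α) − (1{A=d(X)} − π(X;α))/π(X;α) · Q(X,d(X);β₀) ] equals V(d) = E[Y(d)]; i.e., balancing the correctly specified outcome regression restores consistency even when π is misspecified. -/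
/-!
Write `I = 1{A = d(X)}` and `Y(d)` for the potential outcome under the rule. The AIPW integrand
equals `I (Y - Q(X)) / π(X) + Q(X)`, and `E[Y I | X] = Q(X) π₀(X) = E[Q(X) I | X]`, so the first
term has conditional mean zero for every `X`-measurable `π`. For the second, unconfoundedness
factorizes `E[Y(d) I | X] = E[Y(d) | X] π₀(X)`: under the conditional-expectation kernel at a
typical point, `A` is independent of `(Y(1), Y(-1))` and the event `{d(X) = 1}` has mass `0` or
`1`, so `Y(d) I` is there a product of a function of `(Y(1), Y(-1))` and a function of `A`.
Cancelling `π₀ > 0` gives `E[Y(d) | X] = Q(X)`, hence `E[Q(X)] = E[Y(d)]`.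
-/

open MeasureTheory ProbabilityTheory

namespace ProbabilityTheory

section Measure

variable {Ω : Type*} {mΩ : MeasurableSpace Ω} {μ : Measure Ω}

theorem _root_.MeasureTheory.Integrable.mul_ite_eq {f A D : Ω → ℝ} (hf : Integrable f μ)
    (hA : Measurable A) (hD : Measurable D) :
    Integrable (fun ω => f ω * if A ω = D ω then 1 else 0) μ := by
  refine hf.mul_bdd (c := 1) (Measurable.ite (measurableSet_eq_fun hA hD) measurable_const
    measurable_const).aestronglyMeasurable (.of_forall fun ω => ?_)
  split_ifs <;> simp

theorem integrable_ite_eq [IsFiniteMeasure μ] {A D : Ω → ℝ} (hA : Measurable A)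
    (hD : Measurable D) : Integrable (fun ω => if A ω = D ω then (1 : ℝ) else 0) μ := by
  simpa using (integrable_const (1 : ℝ)).mul_ite_eq hA hD

theorem IndepFun.integral_mul_of_ae_eq_comp {α β : Type*} [MeasurableSpace α] [MeasurableSpace β]
    {V : Ω → α} {A : Ω → β} (hVA : IndepFun V A μ) (hV : Measurable V)
    (hA : Measurable A) {φ : α → ℝ} {ψ : β → ℝ} (hφ : Measurable φ) (hψ : Measurable ψ)
    {W I : Ω → ℝ} (hW : W =ᵐ[μ] φ ∘ V) (hI : I =ᵐ[μ] ψ ∘ A) :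
    ∫ ω, W ω * I ω ∂μ = (∫ ω, W ω ∂μ) * ∫ ω, I ω ∂μ := by
  rw [integral_congr_ae hW, integral_congr_ae hI]
  refine (integral_congr_ae (hW.mul hI)).trans ?_
  exact (hVA.comp hφ hψ).integral_fun_mul_eq_mul_integral
    (hφ.comp hV).aestronglyMeasurable (hψ.comp hA).aestronglyMeasurable

theorem integral_mul_sub_eq_zero_of_condExp_eq {m' : MeasurableSpace Ω} (hm' : m' ≤ mΩ)
    [IsFiniteMeasure μ] {w f g : Ω → ℝ} (hw : StronglyMeasurable[m'] w) (hf : Integrable f μ)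
    (hg : Integrable g μ) (hwfg : Integrable (fun ω => w ω * (f ω - g ω)) μ)
    (hfg : μ[f | m'] =ᵐ[μ] μ[g | m']) :
    ∫ ω, w ω * (f ω - g ω) ∂μ = 0 := by
  have hzero : μ[fun ω => w ω * (f ω - g ω) | m'] =ᵐ[μ] fun _ => 0 := by
    filter_upwards [condExp_mul_of_stronglyMeasurable_left (g := f - g) hw hwfg (hf.sub hg),
      condExp_sub hf hg m', hfg] with ω hpull hsub hfg
    change μ[w * (f - g) | m'] ω = 0
    rw [hpull, Pi.mul_apply, hsub, Pi.sub_apply, hfg, sub_self, mul_zero]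
  rw [← integral_condExp hm', integral_congr_ae hzero, integral_zero]

theorem integral_aipw_eq_of_condExp_eq {m' : MeasurableSpace Ω} (hm' : m' ≤ mΩ)
    [IsFiniteMeasure μ] {p Y I G : Ω → ℝ} (hp : Measurable[m'] p) (hp0 : ∀ᵐ ω ∂μ, p ω ≠ 0)
    (hYI : Integrable (fun ω => Y ω * I ω) μ) (hGI : Integrable (fun ω => G ω * I ω) μ)
    (hG : Integrable G μ)
    (haipw : Integrable (fun ω => Y ω * I ω / p ω - (I ω - p ω) / p ω * G ω) μ)
    (hcond : μ[fun ω => Y ω * I ω | m'] =ᵐ[μ] μ[fun ω => G ω * I ω | m']) :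
    ∫ ω, (Y ω * I ω / p ω - (I ω - p ω) / p ω * G ω) ∂μ = ∫ ω, G ω ∂μ := by
  have hdecomp : (fun ω => Y ω * I ω / p ω - (I ω - p ω) / p ω * G ω)
      =ᵐ[μ] fun ω => (p ω)⁻¹ * (Y ω * I ω - G ω * I ω) + G ω := by
    filter_upwards [hp0] with ω hp0
    field_simp
    ring
  have hresidual_int : Integrable (fun ω => (p ω)⁻¹ * (Y ω * I ω - G ω * I ω)) μ :=
    ((haipw.congr hdecomp).sub hG).congr (.of_forall fun ω => add_sub_cancel_right _ _)
  rw [integral_congr_ae hdecomp, integral_add hresidual_int hG,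
    integral_mul_sub_eq_zero_of_condExp_eq (w := fun ω => (p ω)⁻¹) hm' hp.inv.stronglyMeasurable
      hYI hGI hresidual_int hcond, zero_add]

end Measure

variable {Ω : Type*} {m' : MeasurableSpace Ω} [mΩ : MeasurableSpace Ω] [StandardBorelSpace Ω]
  {μ : Measure Ω} [IsFiniteMeasure μ]

theorem CondIndepFun.ae_indepFun_condExpKernel {β β' : Type*} [MeasurableSpace β]
    [MeasurableSpace β'] [MeasurableSpace.CountableOrCountablyGenerated Ω (β × β')]
    {hm' : m' ≤ mΩ} {f : Ω → β} {g : Ω → β'} (hf : Measurable f) (hg : Measurable g)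
    (hfg : CondIndepFun m' hm' f g μ) :
    ∀ᵐ ω ∂μ, IndepFun f g (condExpKernel μ m' ω) := by
  have h := ae_of_ae_trim hm' ((condIndepFun_iff_map_prod_eq_prod_map_map hf hg).1 hfg)
  filter_upwards [h] with ω hω
  rw [indepFun_iff_map_prod_eq_prod_map_map hf.aemeasurable hg.aemeasurable]
  simpa [Kernel.map_apply _ (hf.prodMk hg), Kernel.prod_apply, Kernel.map_apply _ hf,
    Kernel.map_apply _ hg] using hω

theorem ae_condExpKernel_mem_of_mem (hm' : m' ≤ mΩ) {S : Set Ω} (hS : MeasurableSet[m'] S) :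
    ∀ᵐ ω ∂μ, ω ∈ S → ∀ᵐ ω' ∂condExpKernel μ m' ω, ω' ∈ S := by
  have hcond : μ⟦S | m'⟧ = S.indicator 1 :=
    condExp_of_stronglyMeasurable hm' (stronglyMeasurable_const.indicator hS)
      ((integrable_const 1).indicator (hm' S hS))
  filter_upwards [condExpKernel_ae_eq_condExp (μ := μ) hm' (hm' S hS)] with ω hω hωS
  rw [hcond, Set.indicator_of_mem hωS, Pi.one_apply] at hω
  change condExpKernel μ m' ω Sᶜ = 0
  rw [prob_compl_eq_zero_iff (hm' S hS), ← ofReal_measureReal, hω, ENNReal.ofReal_one]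

theorem condExp_mul_ae_eq_of_ae_integral_condExpKernel (hm' : m' ≤ mΩ) {W I : Ω → ℝ}
    (hW : Integrable W μ) (hI : Integrable I μ) (hWI : Integrable (W * I) μ)
    (h : ∀ᵐ ω ∂μ, ∫ ω', W ω' * I ω' ∂condExpKernel μ m' ω
      = (∫ ω', W ω' ∂condExpKernel μ m' ω) * ∫ ω', I ω' ∂condExpKernel μ m' ω) :
    μ[W * I | m'] =ᵐ[μ] μ[W | m'] * μ[I | m'] := by
  filter_upwards [condExp_ae_eq_integral_condExpKernel hm' hWI,
    condExp_ae_eq_integral_condExpKernel hm' hW, condExp_ae_eq_integral_condExpKernel hm' hI, h]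
    with ω hWI hW hI h
  simp only [Pi.mul_apply] at *
  rw [hWI, hW, hI, h]

theorem condExp_outcome_mul_indicator_ae_eq (hm' : m' ≤ mΩ) {A D Y1 Ym1 : Ω → ℝ}
    (hA : Measurable A) (hY1 : Measurable Y1) (hYm1 : Measurable Ym1)
    (huncf : CondIndepFun m' hm' A (fun ω => (Y1 ω, Ym1 ω)) μ)
    (hD : Measurable[m'] D) (hDval : ∀ ω, D ω = 1 ∨ D ω = -1)
    (hYd : Integrable (fun ω => if D ω = 1 then Y1 ω else Ym1 ω) μ) :
    μ[(fun ω => if D ω = 1 then Y1 ω else Ym1 ω) * fun ω => if A ω = D ω then 1 else 0 | m']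
      =ᵐ[μ] μ[fun ω => if D ω = 1 then Y1 ω else Ym1 ω | m']
        * μ[fun ω => if A ω = D ω then 1 else 0 | m'] := by
  set Yd : Ω → ℝ := fun ω => if D ω = 1 then Y1 ω else Ym1 ω
  set I : Ω → ℝ := fun ω => if A ω = D ω then 1 else 0
  have hS : MeasurableSet[m'] {ω | D ω = 1} := hD (measurableSet_singleton 1)
  refine condExp_mul_ae_eq_of_ae_integral_condExpKernel hm' hYd
    (integrable_ite_eq hA (hD.mono hm' le_rfl))
    (hYd.mul_ite_eq hA (hD.mono hm' le_rfl)) ?_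
  filter_upwards [huncf.symm.ae_indepFun_condExpKernel (hY1.prodMk hYm1) hA,
    ae_condExpKernel_mem_of_mem hm' hS, ae_condExpKernel_mem_of_mem hm' hS.compl]
    with ω hind hS hSc
  by_cases hω : D ω = 1
  · refine hind.integral_mul_of_ae_eq_comp (ψ := fun a => if a = 1 then 1 else 0)
      (hY1.prodMk hYm1) hA measurable_fst
      (.ite (measurableSet_singleton 1) measurable_const measurable_const) ?_ ?_ <;>
    filter_upwards [hS hω] with ω' (h' : D ω' = 1) <;> simp [Yd, I, h']
  · refine hind.integral_mul_of_ae_eq_comp (ψ := fun a => if a = -1 then 1 else 0)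
      (hY1.prodMk hYm1) hA measurable_snd
      (.ite (measurableSet_singleton (-1)) measurable_const measurable_const) ?_ ?_ <;>
    filter_upwards [hSc hω] with ω' (h' : ¬ D ω' = 1) <;>
    norm_num [Yd, I, (hDval ω').resolve_left h']

end ProbabilityTheory

theorem balancing_restores_consistency_general
    {Ω 𝓧 : Type*} [MeasurableSpace Ω] [StandardBorelSpace Ω]
    [MeasurableSpace 𝓧]
    (μ : Measure Ω) [IsProbabilityMeasure μ]
    (X : Ω → 𝓧) (hX : Measurable X)
    (A : Ω → ℝ) (hA : Measurable A)
    (Y1 Ym1 Y : Ω → ℝ) (hY1 : Measurable Y1) (hYm1 : Measurable Ym1)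
    -- consistency
    (hcons : ∀ ω, Y ω = (if A ω = 1 then Y1 ω else Ym1 ω))
    -- unconfoundedness
    (huncf : CondIndepFun (MeasurableSpace.comap X inferInstance) hX.comap_le
      A (fun ω => (Y1 ω, Ym1 ω)) μ)
    -- treatment rule
    (d : 𝓧 → ℝ) (hd : Measurable d) (hdval : ∀ x, d x = 1 ∨ d x = -1)
    -- true propensity score π₀(X)=P(A=d(X)|X), with positivity
    (π0 : 𝓧 → ℝ)
    (hπ0 : (fun ω => π0 (X ω)) =ᵐ[μ]
      μ[(fun ω => if A ω = d (X ω) then (1:ℝ) else 0) |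
        MeasurableSpace.comap X inferInstance])
    (hπ0pos : ∀ᵐ ω ∂μ, 0 < π0 (X ω) ∧ π0 (X ω) < 1)
    -- correctly specified outcome model at β₀:
    -- E[Y·1{A=d(X)} | X] = Q(X)·π₀(X) a.s.
    (Q : 𝓧 → ℝ) (hQmeas : Measurable Q)
    (hQint : Integrable (fun ω => Q (X ω)) μ)
    (hQcorrect :
      μ[(fun ω => Y ω * (if A ω = d (X ω) then (1:ℝ) else 0)) |
          MeasurableSpace.comap X inferInstance]
        =ᵐ[μ] fun ω => Q (X ω) * π0 (X ω))
    -- working (possibly misspecified) propensity model, strictly in (0,1)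
    (πw : 𝓧 → ℝ) (hπwmeas : Measurable πw)
    (hπwpos : ∀ᵐ ω ∂μ, 0 < πw (X ω) ∧ πw (X ω) < 1)
    -- integrability as needed
    (hint1 : Integrable (fun ω => if d (X ω) = 1 then Y1 ω else Ym1 ω) μ)
    (hint2 : Integrable (fun ω =>
      Y ω * (if A ω = d (X ω) then (1:ℝ) else 0) / πw (X ω)
        - ((if A ω = d (X ω) then (1:ℝ) else 0) - πw (X ω)) / πw (X ω) * Q (X ω)) μ)
    (hint3 : Integrable (fun ω => Y ω * (if A ω = d (X ω) then (1:ℝ) else 0)) μ) :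
    ∫ ω, (Y ω * (if A ω = d (X ω) then (1:ℝ) else 0) / πw (X ω)
        - ((if A ω = d (X ω) then (1:ℝ) else 0) - πw (X ω)) / πw (X ω) * Q (X ω)) ∂μ
      = ∫ ω, (if d (X ω) = 1 then Y1 ω else Ym1 ω) ∂μ := by
  set I : Ω → ℝ := fun ω => if A ω = d (X ω) then 1 else 0
  set Yd : Ω → ℝ := fun ω => if d (X ω) = 1 then Y1 ω else Ym1 ω
  have hm := hX.comap_le
  have hXm := comap_measurable (m := ‹MeasurableSpace 𝓧›) X
  have hYI : (fun ω => Y ω * I ω) = Yd * I := by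
    funext ω; by_cases h : A ω = d (X ω) <;> simp [I, Yd, hcons, h]
  have hQI : Integrable (fun ω => Q (X ω) * I ω) μ := hQint.mul_ite_eq hA (hd.comp hX)
  have hfac : μ[Yd * I | MeasurableSpace.comap X inferInstance] =ᵐ[μ] μ[Yd | _] * μ[I | _] :=
    condExp_outcome_mul_indicator_ae_eq hm hA hY1 hYm1 huncf (hd.comp hXm)
      (fun ω => hdval (X ω)) hint1
  have hYdQ : μ[Yd | MeasurableSpace.comap X inferInstance] =ᵐ[μ] fun ω => Q (X ω) := by
    filter_upwards [hfac, hYI ▸ hQcorrect, hπ0, hπ0pos] with ω hfac hQ hπ hpos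
    refine mul_right_cancel₀ hpos.1.ne' ?_
    rw [← hQ, hfac, Pi.mul_apply, hπ]
  have hpull : μ[fun ω => Q (X ω) * I ω | MeasurableSpace.comap X inferInstance]
      =ᵐ[μ] (fun ω => Q (X ω)) * μ[I | _] :=
    condExp_mul_of_stronglyMeasurable_left (hQmeas.comp hXm).stronglyMeasurable
      hQI (integrable_ite_eq hA (hd.comp hX))
  calc _ = ∫ ω, Q (X ω) ∂μ := by
        refine integral_aipw_eq_of_condExp_eq hm (hπwmeas.comp hXm)
          (hπwpos.mono fun ω h => h.1.ne') hint3 hQI hQint hint2 ?_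
        filter_upwards [hpull, hQcorrect, hπ0] with ω hpull hQ hπ
        rw [hQ, hpull, Pi.mul_apply, hπ]
    _ = ∫ ω, Yd ω ∂μ := by rw [← integral_congr_ae hYdQ, integral_condExp hm]

/-- If the outcome model is correct (`Q(X,d(X);β₀) = E[Y|X,A=d(X)]` a.s.)
and the working propensity model `π(X;α) ∈ (0,1)` satisfies the population
covariate-balancing equation with the `h`-component `(1-π(X;α))·Q(X,d(X);β₀)`, then the
population AIPW functional equals `V(d) = E[Y(d)]`: balancing the correctly specified
outcome regression restores consistency even when `π` is misspecified. -/
theorem balancing_restores_consistency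
    {Ω 𝓧 : Type*} [MeasurableSpace Ω] [StandardBorelSpace Ω] [Nonempty Ω]
    [MeasurableSpace 𝓧]
    (μ : Measure Ω) [IsProbabilityMeasure μ]
    (X : Ω → 𝓧) (hX : Measurable X)
    (A : Ω → ℝ) (hA : Measurable A) (hAval : ∀ ω, A ω = 1 ∨ A ω = -1)
    (Y1 Ym1 Y : Ω → ℝ) (hY1 : Measurable Y1) (hYm1 : Measurable Ym1)
    -- consistency
    (hcons : ∀ ω, Y ω = (if A ω = 1 then Y1 ω else Ym1 ω))
    -- unconfoundedness
    (huncf : CondIndepFun (MeasurableSpace.comap X inferInstance) hX.comap_le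
      A (fun ω => (Y1 ω, Ym1 ω)) μ)
    -- treatment rule
    (d : 𝓧 → ℝ) (hd : Measurable d) (hdval : ∀ x, d x = 1 ∨ d x = -1)
    -- true propensity score π₀(X)=P(A=d(X)|X), with positivity
    (π0 : 𝓧 → ℝ) (hπ0meas : Measurable π0)
    (hπ0 : (fun ω => π0 (X ω)) =ᵐ[μ]
      μ[(fun ω => if A ω = d (X ω) then (1:ℝ) else 0) |
        MeasurableSpace.comap X inferInstance])
    (hπ0pos : ∀ᵐ ω ∂μ, 0 < π0 (X ω) ∧ π0 (X ω) < 1)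
    -- correctly specified outcome model at β₀:
    -- E[Y·1{A=d(X)} | X] = Q(X)·π₀(X) a.s.
    (Q : 𝓧 → ℝ) (hQmeas : Measurable Q)
    (hQint : Integrable (fun ω => Q (X ω)) μ)
    (hQcorrect :
      μ[(fun ω => Y ω * (if A ω = d (X ω) then (1:ℝ) else 0)) |
          MeasurableSpace.comap X inferInstance]
        =ᵐ[μ] fun ω => Q (X ω) * π0 (X ω))
    -- working (possibly misspecified) propensity model, strictly in (0,1)
    (πw : 𝓧 → ℝ) (hπwmeas : Measurable πw)
    (hπwpos : ∀ᵐ ω ∂μ, 0 < πw (X ω) ∧ πw (X ω) < 1)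
    -- population covariate-balancing equation with h-component (1-π)·Q
    (hbal : ∫ ω, ((if A ω = d (X ω) then (1:ℝ) else 0) / πw (X ω)
        - (1 - (if A ω = d (X ω) then (1:ℝ) else 0)) / (1 - πw (X ω)))
          * ((1 - πw (X ω)) * Q (X ω)) ∂μ = 0)
    -- integrability as needed
    (hint1 : Integrable (fun ω => if d (X ω) = 1 then Y1 ω else Ym1 ω) μ)
    (hint2 : Integrable (fun ω =>
      Y ω * (if A ω = d (X ω) then (1:ℝ) else 0) / πw (X ω)
        - ((if A ω = d (X ω) then (1:ℝ) else 0) - πw (X ω)) / πw (X ω) * Q (X ω)) μ)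
    (hint3 : Integrable (fun ω => Y ω * (if A ω = d (X ω) then (1:ℝ) else 0)) μ)
    (hint4 : Integrable (fun ω => ((if A ω = d (X ω) then (1:ℝ) else 0) / πw (X ω)
        - (1 - (if A ω = d (X ω) then (1:ℝ) else 0)) / (1 - πw (X ω)))
          * ((1 - πw (X ω)) * Q (X ω))) μ) :
    ∫ ω, (Y ω * (if A ω = d (X ω) then (1:ℝ) else 0) / πw (X ω)
        - ((if A ω = d (X ω) then (1:ℝ) else 0) - πw (X ω)) / πw (X ω) * Q (X ω)) ∂μ
      = ∫ ω, (if d (X ω) = 1 then Y1 ω else Ym1 ω) ∂μ :=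
  balancing_restores_consistency_general μ X hX A hA Y1 Ym1 Y hY1 hYm1 hcons huncf d hd hdval π0 hπ0
    hπ0pos Q hQmeas hQint hQcorrect πw hπwmeas hπwpos hint1 hint2 hint3
end

section
/- With Z = 1{A=d(X)}, π₀(X) = P(Z=1|X), and g*(X) = E[Y|X,Z=1], the conditional variance of the centered AIPW function given X satisfies Var( ZY/π₀ − (Z−π₀)/π₀·g(X) | X ) = Var( ZY/π₀ − (Z−π₀)/π₀·g*(X) | X ) + ((1−π₀)/π₀)·(g(X) − g*(X))² for every square-integrable function g of X. -/
open MeasureTheory ProbabilityTheory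
open scoped ENNReal

/-! With `ψ = Z (Y - g*) / π₀` and `D = (g* - g) / π₀`, the AIPW score is
`g* + ψ + D (Z - π₀)` pointwise. Both `ψ` and `Z - π₀` are conditionally centred given `X`,
so the conditional variance is `E[(ψ + D (Z - π₀))² | X]`. The cross term vanishes because
`Z² = Z` gives `ψ (Z - π₀) = (1 - π₀) ψ`, and `E[(Z - π₀)² | X] = π₀ (1 - π₀)`, so the
conditional variance is `E[ψ² | X] + (1 - π₀)/π₀ · (g - g*)²`, where only the second term
depends on `g`. -/

section CondVar

variable {Ω : Type*} {m m₀ : MeasurableSpace Ω} {μ : Measure[m₀] Ω}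

lemma condVar_ae_eq_condExp_sub_sq {f h : Ω → ℝ} (hfh : μ[f | m] =ᵐ[μ] h) :
    Var[f; μ | m] =ᵐ[μ] μ[(f - h) ^ 2 | m] :=
  condExp_congr_ae (by filter_upwards [hfh] with ω hω; simp [hω])

lemma condExp_add_mul_sq {u v c : Ω → ℝ} (hu : MemLp u 2 μ) (hv : MemLp v 2 μ)
    (hc : StronglyMeasurable[m] c) (hcv : MemLp (c * v) 2 μ) :
    μ[(u + c * v) ^ 2 | m] =ᵐ[μ] μ[u ^ 2 | m] + 2 * c * μ[u * v | m] + c ^ 2 * μ[v ^ 2 | m] := by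
  have huv : Integrable (2 * (u * v)) μ := (hu.integrable_mul hv).const_mul 2
  have hcuv : Integrable (c * (2 * (u * v))) μ := by
    convert (hu.integrable_mul hcv).const_mul 2 using 1
    ext ω
    simp only [Pi.mul_apply, Pi.ofNat_apply]
    ring
  have hcv2 : Integrable (c ^ 2 * v ^ 2) μ := by
    convert hcv.integrable_sq using 1
    ext ω
    simp only [Pi.mul_apply, Pi.pow_apply]
    ring
  have hu2 : Integrable (u ^ 2) μ := hu.integrable_sq
  have hv2 : Integrable (v ^ 2) μ := hv.integrable_sq
  rw [show (u + c * v) ^ 2 = u ^ 2 + (c * (2 * (u * v)) + c ^ 2 * v ^ 2) by ring]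
  filter_upwards [condExp_add hu2 (hcuv.add hcv2) m, condExp_add hcuv hcv2 m,
    condExp_mul_of_stronglyMeasurable_left hc hcuv huv,
    condExp_mul_of_stronglyMeasurable_left (hc.pow 2) hcv2 hv2,
    condExp_ofNat (μ := μ) (m := m) 2 (u * v)] with ω h₁ h₂ h₃ h₄ h₅
  simp only [h₁, Pi.add_apply, h₂, h₃, h₄, Pi.mul_apply, h₅]
  ring

variable [IsFiniteMeasure μ]

lemma condVar_add_add_mul (hm : m ≤ m₀) {h u v c : Ω → ℝ}
    (hh : StronglyMeasurable[m] h) (hh₁ : Integrable h μ) (hc : StronglyMeasurable[m] c)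
    (hu : MemLp u 2 μ) (hv : MemLp v 2 μ) (hcv : MemLp (c * v) 2 μ)
    (hu₀ : μ[u | m] =ᵐ[μ] 0) (hv₀ : μ[v | m] =ᵐ[μ] 0) :
    Var[h + u + c * v; μ | m] =ᵐ[μ] μ[u ^ 2 | m] + 2 * c * μ[u * v | m] + c ^ 2 * μ[v ^ 2 | m] := by
  have hu₁ := hu.integrable one_le_two
  have hcv₁ := hcv.integrable one_le_two
  have hmean : μ[h + u + c * v | m] =ᵐ[μ] h := by
    filter_upwards [condExp_add (hh₁.add hu₁) hcv₁ m, condExp_add hh₁ hu₁ m,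
      condExp_mul_of_stronglyMeasurable_left hc hcv₁ (hv.integrable one_le_two), hu₀, hv₀]
      with ω h₁ h₂ h₃ h₄ h₅
    simp [h₁, h₂, h₃, h₄, h₅, condExp_of_stronglyMeasurable hm hh hh₁]
  refine (condVar_ae_eq_condExp_sub_sq hmean).trans ?_
  rw [show h + u + c * v - h = u + c * v by ring]
  exact condExp_add_mul_sq hu hv hc hcv

lemma condExp_sub_sq_ae_eq_mul_one_sub_of_zero_or_one (hm : m ≤ m₀) {Z p : Ω → ℝ}
    (hZ : AEStronglyMeasurable Z μ) (hZ₀₁ : ∀ ω, Z ω = 0 ∨ Z ω = 1) (hpZ : μ[Z | m] =ᵐ[μ] p) :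
    μ[(Z - p) ^ 2 | m] =ᵐ[μ] p * (1 - p) := by
  have hZ_sq : Z ^ 2 = Z := by
    ext ω
    rcases hZ₀₁ ω with h | h <;> simp [h]
  have hZ₂ : MemLp Z 2 μ :=
    MemLp.of_bound hZ 1 (ae_of_all _ fun ω => by rcases hZ₀₁ ω with h | h <;> simp [h])
  filter_upwards [condVar_ae_eq_condExp_sub_sq hpZ, condVar_ae_eq_condExp_sq_sub_sq_condExp hm hZ₂,
    hpZ] with ω h₁ h₂ h₃
  rw [← h₁, h₂, hZ_sq]
  simp only [Pi.sub_apply, Pi.pow_apply, Pi.mul_apply, Pi.one_apply, h₃]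
  ring

end CondVar

lemma MeasureTheory.MemLp.div_of_le {Ω : Type*} {m₀ : MeasurableSpace Ω} {μ : Measure[m₀] Ω}
    {q : ℝ≥0∞} {f p : Ω → ℝ} {ε : ℝ} (hf : MemLp f q μ) (hp : AEStronglyMeasurable p μ)
    (hε : 0 < ε) (hp_bound : ∀ᵐ ω ∂μ, ε ≤ p ω) : MemLp (f / p) q μ := by
  have hp_inv : MemLp p⁻¹ ∞ μ := by
    refine memLp_top_of_bound hp.aemeasurable.inv.aestronglyMeasurable ε⁻¹ ?_
    filter_upwards [hp_bound] with ω hω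
    rw [Pi.inv_apply, norm_inv, Real.norm_of_nonneg (hε.le.trans hω)]
    exact inv_anti₀ hε hω
  rw [div_eq_mul_inv]
  exact hp_inv.mul hf

section AIPW

variable {Ω : Type*} {m m₀ : MeasurableSpace Ω} {μ : Measure[m₀] Ω}

lemma aipw_ae_eq_add_add_mul {Z Y p g G : Ω → ℝ} (hp : ∀ᵐ ω ∂μ, p ω ≠ 0) :
    (fun ω => Z ω * Y ω / p ω - (Z ω - p ω) / p ω * G ω)
      =ᵐ[μ] g + Z * ((Y - g) / p) + (g - G) / p * (Z - p) := by
  filter_upwards [hp] with ω hω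
  simp only [Pi.add_apply, Pi.mul_apply, Pi.div_apply, Pi.sub_apply]
  field_simp
  ring

lemma condExp_mul_sub_div_ae_eq_zero {Z Y p g : Ω → ℝ} (hp : StronglyMeasurable[m] p)
    (hg : StronglyMeasurable[m] g) (hZ : Integrable Z μ) (hZY : Integrable (Z * Y) μ)
    (hgZ : Integrable (g * Z) μ) (hψ : Integrable (Z * ((Y - g) / p)) μ)
    (hpZ : μ[Z | m] =ᵐ[μ] p) (hgZY : μ[Z * Y | m] =ᵐ[μ] g * p) :
    μ[Z * ((Y - g) / p) | m] =ᵐ[μ] 0 := by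
  have hψ_eq : Z * ((Y - g) / p) = p⁻¹ * (Z * Y - g * Z) := by
    ext ω
    simp only [Pi.div_apply, Pi.mul_apply, Pi.sub_apply, Pi.inv_apply]
    ring
  rw [hψ_eq] at hψ ⊢
  filter_upwards [condExp_mul_of_stronglyMeasurable_left hp.measurable.inv.stronglyMeasurable hψ
      (hZY.sub hgZ), condExp_sub hZY hgZ m, condExp_mul_of_stronglyMeasurable_left hg hgZ hZ, hpZ,
    hgZY] with ω h₁ h₂ h₃ h₄ h₅
  simp [h₁, h₂, h₃, h₄, h₅]

lemma condExp_mul_mul_sub_ae_eq_zero_of_zero_or_one {Z w p : Ω → ℝ}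
    (hZ₀₁ : ∀ ω, Z ω = 0 ∨ Z ω = 1) (hp : StronglyMeasurable[m] p) (hZw : Integrable (Z * w) μ)
    (hZwR : Integrable (Z * w * (Z - p)) μ) (h₀ : μ[Z * w | m] =ᵐ[μ] 0) :
    μ[Z * w * (Z - p) | m] =ᵐ[μ] 0 := by
  have h_eq : Z * w * (Z - p) = (1 - p) * (Z * w) := by
    ext ω
    rcases hZ₀₁ ω with h | h <;> simp [h]
    ring
  have h_one_sub : StronglyMeasurable[m] (1 - p) := stronglyMeasurable_const.sub hp
  rw [h_eq] at hZwR ⊢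
  filter_upwards [condExp_mul_of_stronglyMeasurable_left h_one_sub hZwR hZw, h₀] with ω h₁ h₂
  simp [h₁, h₂]

variable [IsFiniteMeasure μ]

lemma condExp_sq_sub_sq_condExp_aipw_ae_eq (hm : m ≤ m₀) {Z Y p g G : Ω → ℝ} {ε : ℝ}
    (hε : 0 < ε) (hZ : AEStronglyMeasurable Z μ) (hZ₀₁ : ∀ ω, Z ω = 0 ∨ Z ω = 1)
    (hY : MemLp Y 2 μ) (hp : StronglyMeasurable[m] p) (hpZ : μ[Z | m] =ᵐ[μ] p)
    (hp_bound : ∀ᵐ ω ∂μ, ε ≤ p ω ∧ p ω ≤ 1) (hg : StronglyMeasurable[m] g) (hg₂ : MemLp g 2 μ)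
    (hgZY : μ[Z * Y | m] =ᵐ[μ] g * p) (hG : StronglyMeasurable[m] G) (hG₂ : MemLp G 2 μ) :
    (fun ω => μ[fun ω' => (Z ω' * Y ω' / p ω' - (Z ω' - p ω') / p ω' * G ω') ^ 2 | m] ω
        - (μ[fun ω' => Z ω' * Y ω' / p ω' - (Z ω' - p ω') / p ω' * G ω' | m] ω) ^ 2)
      =ᵐ[μ] fun ω => μ[(Z * ((Y - g) / p)) ^ 2 | m] ω + (1 - p ω) / p ω * (G ω - g ω) ^ 2 := by
  set ψ := Z * ((Y - g) / p)
  set D := (g - G) / p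
  set R := Z - p
  have hp' : AEStronglyMeasurable p μ := (hp.mono hm).aestronglyMeasurable
  have hp_ne : ∀ᵐ ω ∂μ, p ω ≠ 0 := hp_bound.mono fun _ h => (hε.trans_le h.1).ne'
  have hZ_top : MemLp Z ∞ μ := memLp_top_of_bound hZ 1 <|
    ae_of_all _ fun ω => by rcases hZ₀₁ ω with h | h <;> simp [h]
  have hp_top : MemLp p ∞ μ := by
    refine memLp_top_of_bound hp' 1 ?_
    filter_upwards [hp_bound] with ω hω
    rw [Real.norm_eq_abs, abs_le]
    constructor <;> linarith
  have hR_top : MemLp R ∞ μ := hZ_top.sub hp_top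
  have hψ : MemLp ψ 2 μ :=
    ((hY.sub hg₂).div_of_le hp' hε (hp_bound.mono fun _ h => h.1)).mul hZ_top
  have hD : MemLp D 2 μ := (hg₂.sub hG₂).div_of_le hp' hε (hp_bound.mono fun _ h => h.1)
  have hD_meas : StronglyMeasurable[m] D :=
    ((hg.measurable.sub hG.measurable).div hp.measurable).stronglyMeasurable
  have hψ₀ : μ[ψ | m] =ᵐ[μ] 0 :=
    condExp_mul_sub_div_ae_eq_zero hp hg (hZ_top.integrable le_top)
      ((hY.mul hZ_top).integrable one_le_two) ((hZ_top.mul hg₂).integrable one_le_two)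
      (hψ.integrable one_le_two) hpZ hgZY
  have hR₀ : μ[R | m] =ᵐ[μ] 0 := by
    have hp₁ : Integrable p μ := hp_top.integrable le_top
    filter_upwards [condExp_sub (hZ_top.integrable le_top) hp₁ m, hpZ] with ω h₁ h₂
    simp [R, h₁, h₂, condExp_of_stronglyMeasurable hm hp hp₁]
  have hψR₀ : μ[ψ * R | m] =ᵐ[μ] 0 :=
    condExp_mul_mul_sub_ae_eq_zero_of_zero_or_one hZ₀₁ hp (hψ.integrable one_le_two)
      ((hR_top.mul hψ).integrable one_le_two) hψ₀
  have hR₂ : μ[R ^ 2 | m] =ᵐ[μ] p * (1 - p) :=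
    condExp_sub_sq_ae_eq_mul_one_sub_of_zero_or_one hm hZ hZ₀₁ hpZ
  have hφ := aipw_ae_eq_add_add_mul (Z := Z) (Y := Y) (g := g) (G := G) hp_ne
  filter_upwards [condVar_ae_eq_condExp_sq_sub_sq_condExp hm
      (((hg₂.add hψ).add (hR_top.mul hD)).ae_eq hφ.symm),
    condVar_congr_ae (m := m) hφ, condVar_add_add_mul hm hg (hg₂.integrable one_le_two) hD_meas hψ
      (hR_top.mono_exponent le_top) (hR_top.mul hD) hψ₀ hR₀, hψR₀, hR₂, hp_ne]
    with ω h₁ h₂ h₃ h₄ h₅ hω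
  refine h₁.symm.trans (h₂.trans (h₃.trans ?_))
  simp only [Pi.add_apply, Pi.mul_apply, Pi.pow_apply, Pi.ofNat_apply, h₄, h₅, D, Pi.div_apply,
    Pi.sub_apply]
  field_simp
  ring

end AIPW

theorem aipw_conditional_variance_decomposition_general
    {Ω 𝓧 : Type*} [MeasurableSpace Ω] [MeasurableSpace 𝓧]
    (μ : Measure Ω) [IsProbabilityMeasure μ]
    (X : Ω → 𝓧) (hX : Measurable X)
    (Z : Ω → ℝ) (hZ : Measurable Z) (hZval : ∀ ω, Z ω = 0 ∨ Z ω = 1)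
    (Y : Ω → ℝ) (hYL2 : MemLp Y 2 μ)
    (π0 : 𝓧 → ℝ) (hπ0meas : Measurable π0)
    (hπ0 : (fun ω => π0 (X ω)) =ᵐ[μ] μ[Z | MeasurableSpace.comap X inferInstance])
    (ε : ℝ) (hε : 0 < ε)
    (hπ0pos : ∀ᵐ ω ∂μ, ε < π0 (X ω) ∧ π0 (X ω) < 1 - ε)
    -- g*(X) = E[Y | X, Z=1]: characterized by E[ZY|X] = g*(X)·π₀(X) a.s.
    (gstar : 𝓧 → ℝ) (hgstarmeas : Measurable gstar)
    (hgstarL2 : MemLp (fun ω => gstar (X ω)) 2 μ)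
    (hgstar : μ[(fun ω => Z ω * Y ω) | MeasurableSpace.comap X inferInstance]
      =ᵐ[μ] fun ω => gstar (X ω) * π0 (X ω)) :
    ∀ g : 𝓧 → ℝ, Measurable g → MemLp (fun ω => g (X ω)) 2 μ →
      (fun ω =>
        (μ[(fun ω' => (Z ω' * Y ω' / π0 (X ω')
            - (Z ω' - π0 (X ω')) / π0 (X ω') * g (X ω')) ^ 2) |
          MeasurableSpace.comap X inferInstance]) ω
        - ((μ[(fun ω' => Z ω' * Y ω' / π0 (X ω')
            - (Z ω' - π0 (X ω')) / π0 (X ω') * g (X ω')) |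
          MeasurableSpace.comap X inferInstance]) ω) ^ 2)
      =ᵐ[μ] fun ω =>
        ((μ[(fun ω' => (Z ω' * Y ω' / π0 (X ω')
            - (Z ω' - π0 (X ω')) / π0 (X ω') * gstar (X ω')) ^ 2) |
          MeasurableSpace.comap X inferInstance]) ω
        - ((μ[(fun ω' => Z ω' * Y ω' / π0 (X ω')
            - (Z ω' - π0 (X ω')) / π0 (X ω') * gstar (X ω')) |
          MeasurableSpace.comap X inferInstance]) ω) ^ 2)
        + (1 - π0 (X ω)) / π0 (X ω) * (g (X ω) - gstar (X ω)) ^ 2 := by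
  intro g hg hg₂
  have hm : MeasurableSpace.comap X inferInstance ≤ ‹MeasurableSpace Ω› := hX.comap_le
  have hXm : Measurable[MeasurableSpace.comap X inferInstance] X := comap_measurable X
  have hp_bound : ∀ᵐ ω ∂μ, ε ≤ π0 (X ω) ∧ π0 (X ω) ≤ 1 := by
    filter_upwards [hπ0pos] with ω hω
    exact ⟨hω.1.le, by linarith [hω.2]⟩
  have hdecomp (G : 𝓧 → ℝ) (hG : Measurable G) (hG₂ : MemLp (fun ω => G (X ω)) 2 μ) :=
    condExp_sq_sub_sq_condExp_aipw_ae_eq (p := fun ω => π0 (X ω)) (g := fun ω => gstar (X ω))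
      (G := fun ω => G (X ω)) hm hε hZ.aestronglyMeasurable hZval hYL2
      (hπ0meas.comp hXm).stronglyMeasurable hπ0.symm hp_bound
      (hgstarmeas.comp hXm).stronglyMeasurable hgstarL2 hgstar (hG.comp hXm).stronglyMeasurable hG₂
  filter_upwards [hdecomp g hg hg₂, hdecomp gstar hgstarmeas hgstarL2] with ω h₁ h₂
  rw [h₁, h₂]
  ring

/-- With `Z ∈ {0,1}`, `π₀(X) = P(Z=1|X) ∈ (ε,1-ε)` and
`g*(X) = E[Y|X,Z=1]`, the conditional variance of the AIPW function given `X`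
satisfies, for every square-integrable `g` of `X`,
`Var(ZY/π₀ - (Z-π₀)/π₀·g(X) | X) = Var(ZY/π₀ - (Z-π₀)/π₀·g*(X) | X)
   + ((1-π₀)/π₀)·(g(X) - g*(X))²` a.s. -/
theorem aipw_conditional_variance_decomposition
    {Ω 𝓧 : Type*} [MeasurableSpace Ω] [StandardBorelSpace Ω] [Nonempty Ω]
    [MeasurableSpace 𝓧]
    (μ : Measure Ω) [IsProbabilityMeasure μ]
    (X : Ω → 𝓧) (hX : Measurable X)
    (Z : Ω → ℝ) (hZ : Measurable Z) (hZval : ∀ ω, Z ω = 0 ∨ Z ω = 1)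
    (Y : Ω → ℝ) (hY : Measurable Y) (hYL2 : MemLp Y 2 μ)
    (π0 : 𝓧 → ℝ) (hπ0meas : Measurable π0)
    (hπ0 : (fun ω => π0 (X ω)) =ᵐ[μ] μ[Z | MeasurableSpace.comap X inferInstance])
    (ε : ℝ) (hε : 0 < ε)
    (hπ0pos : ∀ᵐ ω ∂μ, ε < π0 (X ω) ∧ π0 (X ω) < 1 - ε)
    -- g*(X) = E[Y | X, Z=1]: characterized by E[ZY|X] = g*(X)·π₀(X) a.s.
    (gstar : 𝓧 → ℝ) (hgstarmeas : Measurable gstar)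
    (hgstarL2 : MemLp (fun ω => gstar (X ω)) 2 μ)
    (hgstar : μ[(fun ω => Z ω * Y ω) | MeasurableSpace.comap X inferInstance]
      =ᵐ[μ] fun ω => gstar (X ω) * π0 (X ω)) :
    ∀ g : 𝓧 → ℝ, Measurable g → MemLp (fun ω => g (X ω)) 2 μ →
      (fun ω =>
        (μ[(fun ω' => (Z ω' * Y ω' / π0 (X ω')
            - (Z ω' - π0 (X ω')) / π0 (X ω') * g (X ω')) ^ 2) |
          MeasurableSpace.comap X inferInstance]) ω
        - ((μ[(fun ω' => Z ω' * Y ω' / π0 (X ω')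
            - (Z ω' - π0 (X ω')) / π0 (X ω') * g (X ω')) |
          MeasurableSpace.comap X inferInstance]) ω) ^ 2)
      =ᵐ[μ] fun ω =>
        ((μ[(fun ω' => (Z ω' * Y ω' / π0 (X ω')
            - (Z ω' - π0 (X ω')) / π0 (X ω') * gstar (X ω')) ^ 2) |
          MeasurableSpace.comap X inferInstance]) ω
        - ((μ[(fun ω' => Z ω' * Y ω' / π0 (X ω')
            - (Z ω' - π0 (X ω')) / π0 (X ω') * gstar (X ω')) |
          MeasurableSpace.comap X inferInstance]) ω) ^ 2)
        + (1 - π0 (X ω)) / π0 (X ω) * (g (X ω) - gstar (X ω)) ^ 2 :=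
  aipw_conditional_variance_decomposition_general μ X hX Z hZ hZval Y hYL2 π0 hπ0meas hπ0 ε hε
    hπ0pos gstar hgstarmeas hgstarL2 hgstar
end
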